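/- arXiv:2303.17848 — 3 statements merged into one kernel-verified Lean document; each statement's English description precedes it below -/
import Mathlib

section
/- Let X be a rearrangement invariant space over (-1,1) with Boyd indices satisfying 0 < lower Boyd index ≤ upper Boyd index < 1, and let T_X : X → X be the (bounded) finite Hilbert transform. Then every simple function belongs to the order continuous part X_a of X, and T_X maps X_a into X_a. -/
open MeasureTheory Set Filter Topology ENNReal NNReal

noncomputable section

/-- Lebesgue measure on the interval `(-1, 1)`. -/
def vol : Measure ℝ := volume.restrict (Set.Ioo (-1 : ℝ) 1)

/-- The finite Hilbert transform, defined at `x` as the principal value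
`(1/π) lim_{ε→0⁺} (∫_{-1}^{x-ε} + ∫_{x+ε}^{1}) f(y)/(y-x) dy`. -/
def FHT (f : ℝ → ℝ) (x : ℝ) : ℝ :=
  limUnder (nhdsWithin (0 : ℝ) (Set.Ioi 0)) fun ε : ℝ =>
    (1 / Real.pi) * ((∫ y in Set.Ioo (-1 : ℝ) (x - ε), f y / (y - x)) +
      ∫ y in Set.Ioo (x + ε) (1 : ℝ), f y / (y - x))

/-- Order continuity of the norm: `f_n ↓ 0` (a.e.) implies `‖f_n‖ ↓ 0`. -/
def OrderContinuousNorm (Mem : (ℝ → ℝ) → Prop) (Nrm : (ℝ → ℝ) → ℝ) : Prop :=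
  ∀ f : ℕ → ℝ → ℝ, (∀ n, Mem (f n)) →
    (∀ n, ∀ᵐ x ∂vol, 0 ≤ f (n + 1) x ∧ f (n + 1) x ≤ f n x) →
    (∀ᵐ x ∂vol, Tendsto (fun n => f n x) atTop (𝓝 0)) →
    Tendsto (fun n => Nrm (f n)) atTop (𝓝 0)

/-- The Fatou property: for a norm-bounded increasing sequence `0 ≤ f_n ↑ g` one has
`g ∈ X` and `‖f_n‖ → ‖g‖`. -/
def FatouProperty (Mem : (ℝ → ℝ) → Prop) (Nrm : (ℝ → ℝ) → ℝ) : Prop :=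
  ∀ (f : ℕ → ℝ → ℝ) (g : ℝ → ℝ) (C : ℝ), (∀ n, Mem (f n)) → AEMeasurable g vol →
    (∀ n, ∀ᵐ x ∂vol, 0 ≤ f n x ∧ f n x ≤ f (n + 1) x) →
    (∀ᵐ x ∂vol, Tendsto (fun n => f n x) atTop (𝓝 (g x))) →
    (∀ n, Nrm (f n) ≤ C) →
    Mem g ∧ Tendsto (fun n => Nrm (f n)) atTop (𝓝 (Nrm g))

/-- The order continuous (absolutely continuous) part `Y_a` of a function space:
`f ∈ Y_a` iff `|f| ≥ g_n ↓ 0` (a.e.) implies `‖g_n‖ ↓ 0`. -/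
def OCPart (Mem : (ℝ → ℝ) → Prop) (Nrm : (ℝ → ℝ) → ℝ) (f : ℝ → ℝ) : Prop :=
  Mem f ∧ ∀ g : ℕ → ℝ → ℝ, (∀ n, Mem (g n)) →
    (∀ n, ∀ᵐ x ∂vol, 0 ≤ g n x ∧ g (n + 1) x ≤ g n x ∧ g n x ≤ |f x|) →
    (∀ᵐ x ∂vol, Tendsto (fun n => g n x) atTop (𝓝 0)) →
    Tendsto (fun n => Nrm (g n)) atTop (𝓝 0)

/-- A Banach function space over `((-1,1), ℬ, μ)`: an order ideal of `L⁰` containing the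
simple functions, complete under a lattice norm. -/
structure BFS where
  Mem : (ℝ → ℝ) → Prop
  Nrm : (ℝ → ℝ) → ℝ
  mem_aemeasurable : ∀ f, Mem f → AEMeasurable f vol
  mem_congr : ∀ f g, f =ᵐ[vol] g → Mem f → Mem g
  nrm_congr : ∀ f g, f =ᵐ[vol] g → Nrm f = Nrm g
  add_mem : ∀ f g, Mem f → Mem g → Mem (f + g)
  smul_mem : ∀ (c : ℝ) f, Mem f → Mem (c • f)
  ideal_mem : ∀ f g, Mem f → AEMeasurable g vol → (∀ᵐ x ∂vol, |g x| ≤ |f x|) → Mem g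
  simple_mem : ∀ s : MeasureTheory.SimpleFunc ℝ ℝ, Mem s
  nrm_nonneg : ∀ f, Mem f → 0 ≤ Nrm f
  nrm_eq_zero_iff : ∀ f, Mem f → (Nrm f = 0 ↔ f =ᵐ[vol] 0)
  nrm_add_le : ∀ f g, Mem f → Mem g → Nrm (f + g) ≤ Nrm f + Nrm g
  nrm_smul : ∀ (c : ℝ) f, Mem f → Nrm (c • f) = |c| * Nrm f
  nrm_mono : ∀ f g, Mem f → Mem g → (∀ᵐ x ∂vol, |f x| ≤ |g x|) → Nrm f ≤ Nrm g
  complete : ∀ f : ℕ → ℝ → ℝ, (∀ n, Mem (f n)) →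
    (∀ ε : ℝ, 0 < ε → ∃ N, ∀ m ≥ N, ∀ n ≥ N, Nrm (f m - f n) < ε) →
    ∃ g, Mem g ∧ Tendsto (fun n => Nrm (f n - g)) atTop (𝓝 0)

/-- Distribution function `λ ↦ μ{|f| > λ}`. -/
def distrib (f : ℝ → ℝ) (lam : ℝ) : ℝ≥0∞ := vol {x | lam < |f x|}

/-- Rearrangement invariant space: Fatou property, membership is monotone with respect to
the distribution function (equivalently the decreasing rearrangement), and the norm is
rearrangement invariant. -/
def RearrInvariant (X : BFS) : Prop :=
  FatouProperty X.Mem X.Nrm ∧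
  (∀ f g, X.Mem f → AEMeasurable g vol →
    (∀ lam : ℝ, 0 < lam → distrib g lam ≤ distrib f lam) → X.Mem g) ∧
  (∀ f g, X.Mem f → X.Mem g →
    (∀ lam : ℝ, 0 < lam → distrib g lam = distrib f lam) → X.Nrm g = X.Nrm f)

/-- The dilation operator `E_t`. -/
def dilate (t : ℝ) (f : ℝ → ℝ) : ℝ → ℝ := fun x =>
  if t * x ∈ Set.Ioo (-1 : ℝ) 1 then f (t * x) else 0

/-- The operator norm of the dilation `E_t` on `X`. -/
def dilNorm (X : BFS) (t : ℝ) : ℝ :=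
  sInf {C : ℝ | 0 ≤ C ∧ ∀ f, X.Mem f → X.Mem (dilate t f) ∧ X.Nrm (dilate t f) ≤ C * X.Nrm f}

/-- The lower Boyd index of `X`. -/
def lowerBoyd (X : BFS) : ℝ :=
  sSup {r : ℝ | ∃ t ∈ Set.Ioo (0 : ℝ) 1, r = Real.log (dilNorm X (1 / t)) / Real.log t}

/-- The upper Boyd index of `X`. -/
def upperBoyd (X : BFS) : ℝ :=
  sInf {r : ℝ | ∃ t ∈ Set.Ioi (1 : ℝ), r = Real.log (dilNorm X (1 / t)) / Real.log t}

/-- Nontrivial Boyd indices: `0 < α_X ≤ ᾱ_X < 1`. -/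
def NontrivialBoyd (X : BFS) : Prop :=
  0 < lowerBoyd X ∧ lowerBoyd X ≤ upperBoyd X ∧ upperBoyd X < 1

/-- The finite Hilbert transform maps `X` boundedly into `X` (Boyd's theorem). -/
def THilbBounded (X : BFS) : Prop :=
  (∀ f, X.Mem f → X.Mem (FHT f)) ∧
  ∃ C : ℝ, ∀ f, X.Mem f → X.Nrm (FHT f) ≤ C * X.Nrm f
namespace FHTAux

/-! ### Basic measure facts -/

lemma vol_univ_eq : vol Set.univ = 2 := by
  rw [vol, Measure.restrict_apply_univ, Real.volume_Ioo,
    show (1 : ℝ) - -1 = 2 by norm_num]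
  exact ENNReal.ofReal_ofNat 2

instance : IsFiniteMeasure vol := by
  constructor
  rw [vol_univ_eq]
  exact ENNReal.ofNat_lt_top

lemma vol_le_two (s : Set ℝ) : vol s ≤ 2 := by
  rw [← vol_univ_eq]; exact measure_mono (Set.subset_univ s)

lemma vol_ne_top (s : Set ℝ) : vol s ≠ ⊤ :=
  ne_top_of_le_ne_top ENNReal.ofNat_ne_top (vol_le_two s)

lemma vol_Ioo {a : ℝ} (ha : 0 ≤ a) (ha1 : a ≤ 1) : vol (Set.Ioo (-a) a) = ENNReal.ofReal (2 * a) := by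
  rw [vol, Measure.restrict_apply measurableSet_Ioo,
    Set.inter_eq_self_of_subset_left (Set.Ioo_subset_Ioo (by linarith) ha1), Real.volume_Ioo]
  ring_nf

/-! ### Indicators -/

/-- indicator of symmetric interval -/
def ind (a : ℝ) : ℝ → ℝ := (Set.Ioo (-a) a).indicator (fun _ => (1 : ℝ))

lemma mem_const (X : BFS) (c : ℝ) : X.Mem (fun _ => c) := by
  have h := X.simple_mem (MeasureTheory.SimpleFunc.const ℝ c)
  exact h

lemma mem_of_bound (X : BFS) (u : ℝ → ℝ) (B : ℝ) (hB : 0 ≤ B)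
    (hmeas : AEMeasurable u vol) (hb : ∀ᵐ x ∂vol, |u x| ≤ B) : X.Mem u := by
  refine X.ideal_mem (fun _ => B) u (mem_const X B) hmeas ?_
  filter_upwards [hb] with x hx
  rwa [abs_of_nonneg hB]

lemma mem_indicator (X : BFS) {E : Set ℝ} (hE : MeasurableSet E) :
    X.Mem (E.indicator (fun _ => (1 : ℝ))) := by
  refine mem_of_bound X _ 1 zero_le_one ((measurable_const.indicator hE).aemeasurable) ?_
  filter_upwards with x
  by_cases hx : x ∈ E
  · rw [Set.indicator_of_mem hx]; simp
  · rw [Set.indicator_of_notMem hx]; simp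

lemma mem_ind (X : BFS) (a : ℝ) : X.Mem (ind a) := mem_indicator X measurableSet_Ioo

lemma nrm_const (X : BFS) (c : ℝ) : X.Nrm (fun _ => c) = |c| * X.Nrm (fun _ => (1 : ℝ)) := by
  have : (fun (_ : ℝ) => c) = c • (fun _ => (1 : ℝ)) := by funext x; simp
  rw [this, X.nrm_smul c _ (mem_const X 1)]

/-! ### Rearrangement invariance for indicators -/

lemma nrm_indicator_eq (X : BFS) (hri : RearrInvariant X) {E : Set ℝ} (hE : MeasurableSet E) :
    X.Nrm (E.indicator (fun _ => (1 : ℝ))) = X.Nrm (ind ((vol E).toReal / 2)) := by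
  set b : ℝ := (vol E).toReal / 2 with hb
  have hb0 : 0 ≤ b := by positivity
  have hb1 : b ≤ 1 := by
    have h2 : (vol E).toReal ≤ 2 := by
      have := ENNReal.toReal_mono ENNReal.ofNat_ne_top (vol_le_two E)
      simpa using this
    simp only [hb]; linarith
  have hvol : vol (Set.Ioo (-b) b) = vol E := by
    rw [vol_Ioo hb0 hb1]
    rw [hb, show 2 * ((vol E).toReal / 2) = (vol E).toReal by ring,
      ENNReal.ofReal_toReal (vol_ne_top E)]
  refine hri.2.2 (ind b) (E.indicator (fun _ => (1 : ℝ))) (mem_ind X b) (mem_indicator X hE) ?_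
  intro lam hlam
  unfold distrib
  rcases lt_or_ge lam 1 with h1 | h1
  · have hset : ∀ (F : Set ℝ), {x | lam < |F.indicator (fun _ => (1:ℝ)) x|} = F := by
      intro F
      ext x
      by_cases hx : x ∈ F
      · simp [Set.indicator_of_mem hx, hx, h1, abs_of_nonneg]
      · simp only [Set.mem_setOf_eq, Set.indicator_of_notMem hx]
        simp only [abs_zero]
        constructor
        · intro hcon; linarith
        · intro hcon; exact absurd hcon hx
    rw [hset E, show ind b = (Set.Ioo (-b) b).indicator (fun _ => (1:ℝ)) from rfl, hset _, hvol]
  · have hset : ∀ (F : Set ℝ), {x | lam < |F.indicator (fun _ => (1:ℝ)) x|} = (∅ : Set ℝ) := by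
      intro F
      ext x
      simp only [Set.mem_setOf_eq, Set.mem_empty_iff_false, iff_false, not_lt]
      by_cases hx : x ∈ F
      · rw [Set.indicator_of_mem hx]; rw [abs_of_nonneg zero_le_one]; exact h1
      · rw [Set.indicator_of_notMem hx]; rw [abs_zero]; linarith
    rw [hset E, show ind b = (Set.Ioo (-b) b).indicator (fun _ => (1:ℝ)) from rfl, hset _]

/-- `Φ` : norm of an indicator as a function of the measure. -/
def Phi (X : BFS) (v : ℝ≥0∞) : ℝ := X.Nrm (ind (v.toReal / 2))

lemma nrm_indicator_eq' (X : BFS) (hri : RearrInvariant X) {E : Set ℝ} (hE : MeasurableSet E) :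
    X.Nrm (E.indicator (fun _ => (1 : ℝ))) = Phi X (vol E) := nrm_indicator_eq X hri hE

lemma Phi_mono (X : BFS) {v w : ℝ≥0∞} (hvw : v ≤ w) (hw : w ≤ 2) : Phi X v ≤ Phi X w := by
  have hwt : w ≠ ⊤ := ne_top_of_le_ne_top ENNReal.ofNat_ne_top hw
  have hbv : v.toReal / 2 ≤ w.toReal / 2 := by
    have := ENNReal.toReal_mono hwt hvw
    linarith
  refine X.nrm_mono _ _ (mem_ind X _) (mem_ind X _) ?_
  filter_upwards with x
  unfold ind
  by_cases hx : x ∈ Set.Ioo (-(v.toReal / 2)) (v.toReal / 2)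
  · rw [Set.indicator_of_mem hx,
      Set.indicator_of_mem (Set.Ioo_subset_Ioo (by linarith) hbv hx)]
  · rw [Set.indicator_of_notMem hx, abs_zero]
    exact abs_nonneg _

lemma nrm_ind_pos (X : BFS) {a : ℝ} (ha : 0 < a) : 0 < X.Nrm (ind a) := by
  rcases lt_or_eq_of_le (X.nrm_nonneg _ (mem_ind X a)) with h | h
  · exact h
  · exfalso
    have hz : ind a =ᵐ[vol] 0 := (X.nrm_eq_zero_iff _ (mem_ind X a)).mp h.symm
    set c := min a 1 with hc
    have hc0 : 0 < c := lt_min ha one_pos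
    have hsub : Set.Ioo (-c) c ⊆ {x | ¬ ind a x = 0} := by
      intro x hx
      have hxa : x ∈ Set.Ioo (-a) a :=
        Set.Ioo_subset_Ioo (neg_le_neg (min_le_left a 1)) (min_le_left a 1) hx
      simp only [Set.mem_setOf_eq]
      unfold ind
      rw [Set.indicator_of_mem hxa]
      norm_num
    have hmeas : vol {x | ¬ ind a x = 0} = 0 := by
      have := hz
      rw [Filter.EventuallyEq, MeasureTheory.ae_iff] at this
      simpa using this
    have : vol (Set.Ioo (-c) c) = 0 := le_antisymm (hmeas ▸ measure_mono hsub) bot_le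
    rw [vol_Ioo (le_of_lt hc0) (min_le_right a 1)] at this
    rw [ENNReal.ofReal_eq_zero] at this
    linarith

lemma Phi_two (X : BFS) : Phi X 2 = X.Nrm (ind 1) := by
  unfold Phi
  norm_num

end FHTAux
namespace FHTAux

/-! ### Extraction from nontrivial Boyd indices -/

lemma dilNorm_nonneg (X : BFS) (s : ℝ) : 0 ≤ dilNorm X s :=
  Real.sInf_nonneg (fun _ hc => hc.1)

lemma exists_compress (X : BFS) (hB : NontrivialBoyd X) :
    ∃ t C : ℝ, 0 < t ∧ t < 1 ∧ 0 ≤ C ∧ C < 1 ∧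
      ∀ f, X.Mem f → X.Mem (dilate (1/t) f) ∧ X.Nrm (dilate (1/t) f) ≤ C * X.Nrm f := by
  have h1 : 0 < lowerBoyd X := hB.1
  set S := {r : ℝ | ∃ t ∈ Set.Ioo (0 : ℝ) 1, r = Real.log (dilNorm X (1 / t)) / Real.log t}
    with hS
  have hSne : S.Nonempty :=
    ⟨Real.log (dilNorm X (1 / (1/2))) / Real.log (1/2), ⟨1/2, by norm_num, rfl⟩⟩
  have hbdd : BddAbove S := by
    by_contra hb
    rw [lowerBoyd, ← hS, Real.sSup_of_not_bddAbove hb] at h1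
    exact lt_irrefl 0 h1
  obtain ⟨r, hrS, hr⟩ := exists_lt_of_lt_csSup hSne h1
  obtain ⟨t, ht, rfl⟩ := hrS
  set D := dilNorm X (1 / t) with hD
  have hlogt : Real.log t < 0 := Real.log_neg ht.1 ht.2
  have hlogD : Real.log D < 0 := by
    rcases div_pos_iff.mp hr with ⟨h1', h2'⟩ | ⟨h1', h2'⟩
    · linarith
    · exact h1'
  have hD0 : 0 ≤ D := dilNorm_nonneg X _
  have hDpos : 0 < D := by
    rcases lt_or_eq_of_le hD0 with h | h
    · exact h
    · exfalso; rw [← h, Real.log_zero] at hlogD; linarith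
  have hD1 : D < 1 := (Real.log_neg_iff hDpos).mp hlogD
  set A := {C : ℝ | 0 ≤ C ∧ ∀ f, X.Mem f → X.Mem (dilate (1/t) f) ∧
    X.Nrm (dilate (1/t) f) ≤ C * X.Nrm f} with hA
  have hAD : D = sInf A := by rw [hD, dilNorm]
  have hAne : A.Nonempty := by
    by_contra hc
    rw [Set.not_nonempty_iff_eq_empty] at hc
    rw [hAD, hc, Real.sInf_empty] at hDpos
    exact lt_irrefl 0 hDpos
  obtain ⟨C, hCA, hC1⟩ := exists_lt_of_csInf_lt hAne (hAD ▸ hD1)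
  exact ⟨t, C, ht.1, ht.2, hCA.1, hC1, hCA.2⟩

lemma exists_stretch (X : BFS) (hB : NontrivialBoyd X) :
    ∃ t C : ℝ, 1 < t ∧ 1 < C ∧ C < t ∧
      ∀ f, X.Mem f → X.Mem (dilate (1/t) f) ∧ X.Nrm (dilate (1/t) f) ≤ C * X.Nrm f := by
  have h3 : 0 < upperBoyd X := lt_of_lt_of_le hB.1 hB.2.1
  have h2 : upperBoyd X < 1 := hB.2.2
  set S := {r : ℝ | ∃ t ∈ Set.Ioi (1 : ℝ), r = Real.log (dilNorm X (1 / t)) / Real.log t}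
    with hS
  have hSne : S.Nonempty :=
    ⟨Real.log (dilNorm X (1 / 2)) / Real.log 2, ⟨2, by norm_num, rfl⟩⟩
  have hbdd : BddBelow S := by
    by_contra hb
    rw [upperBoyd, ← hS, Real.sInf_of_not_bddBelow hb] at h3
    exact lt_irrefl 0 h3
  obtain ⟨r, hrS, hr1⟩ := exists_lt_of_csInf_lt hSne h2
  have hrpos : 0 < r := lt_of_lt_of_le h3 (csInf_le hbdd hrS)
  obtain ⟨t, ht, rfl⟩ := hrS
  rw [Set.mem_Ioi] at ht
  set D := dilNorm X (1 / t) with hD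
  have hlogt : 0 < Real.log t := Real.log_pos ht
  have hlogD : Real.log D = (Real.log (dilNorm X (1/t)) / Real.log t) * Real.log t := by
    field_simp
    rfl
  have hlogDpos : 0 < Real.log D := by
    rw [hlogD]; exact mul_pos hrpos hlogt
  have hlogDlt : Real.log D < Real.log t := by
    rw [hlogD]
    nlinarith
  have hD1 : 1 < D := by
    by_contra hc
    push_neg at hc
    have : Real.log D ≤ 0 := Real.log_nonpos (dilNorm_nonneg X _) hc
    linarith
  have hDt : D < t := by
    have := Real.exp_lt_exp.mpr hlogDlt
    rwa [Real.exp_log (by linarith), Real.exp_log (by linarith)] at this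
  set A := {C : ℝ | 0 ≤ C ∧ ∀ f, X.Mem f → X.Mem (dilate (1/t) f) ∧
    X.Nrm (dilate (1/t) f) ≤ C * X.Nrm f} with hA
  have hAD : D = sInf A := by rw [hD, dilNorm]
  have hAne : A.Nonempty := by
    by_contra hc
    rw [Set.not_nonempty_iff_eq_empty] at hc
    rw [hAD, hc, Real.sInf_empty] at hD1
    linarith
  obtain ⟨C, hCA, hCt⟩ := exists_lt_of_csInf_lt hAne (hAD ▸ hDt)
  refine ⟨t, max C ((1+t)/2), ht, ?_, ?_, ?_⟩
  · have : (1:ℝ) < (1+t)/2 := by linarith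
    exact lt_of_lt_of_le this (le_max_right _ _)
  · apply max_lt hCt
    linarith
  · intro f hf
    refine ⟨(hCA.2 f hf).1, le_trans (hCA.2 f hf).2 ?_⟩
    exact mul_le_mul_of_nonneg_right (le_max_left _ _) (X.nrm_nonneg f hf)

/-! ### Dilation of interval indicators -/

lemma dilate_ind {v a : ℝ} (hv : 0 < v) (ha : 0 < a) (ha1 : a ≤ 1) :
    dilate v (ind a) = ind (a / v) := by
  funext x
  have habs : |v * x| = v * |x| := by rw [abs_mul, abs_of_pos hv]
  have hiff : |x| < a / v ↔ |v * x| < a := by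
    rw [habs, lt_div_iff₀ hv, mul_comm]
  show (if v * x ∈ Set.Ioo (-1:ℝ) 1 then ind a (v * x) else 0) = ind (a/v) x
  by_cases h : |x| < a / v
  · have hva : |v * x| < a := hiff.mp h
    have h2 : v * x ∈ Set.Ioo (-1:ℝ) 1 := by
      rw [Set.mem_Ioo, ← abs_lt]; exact lt_of_lt_of_le hva ha1
    have h3 : v * x ∈ Set.Ioo (-a) a := by rw [Set.mem_Ioo, ← abs_lt]; exact hva
    have h4 : x ∈ Set.Ioo (-(a/v)) (a/v) := by rw [Set.mem_Ioo, ← abs_lt]; exact h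
    rw [if_pos h2]
    unfold ind
    rw [Set.indicator_of_mem h3, Set.indicator_of_mem h4]
  · have h4 : x ∉ Set.Ioo (-(a/v)) (a/v) := by rw [Set.mem_Ioo, ← abs_lt]; exact h
    have hrhs : ind (a/v) x = 0 := Set.indicator_of_notMem h4 _
    rw [hrhs]
    by_cases h2 : v * x ∈ Set.Ioo (-1:ℝ) 1
    · rw [if_pos h2]
      have h3 : v * x ∉ Set.Ioo (-a) a := by
        rw [Set.mem_Ioo, ← abs_lt]; exact fun hc => h (hiff.mpr hc)
      exact Set.indicator_of_notMem h3 _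
    · rw [if_neg h2]

lemma nrm_ind_pow_le (X : BFS) {t C : ℝ} (ht0 : 0 < t) (ht1 : t < 1) (hC0 : 0 ≤ C)
    (hadm : ∀ f, X.Mem f → X.Mem (dilate (1/t) f) ∧ X.Nrm (dilate (1/t) f) ≤ C * X.Nrm f) :
    ∀ k : ℕ, X.Nrm (ind (t ^ k)) ≤ C ^ k * X.Nrm (ind 1) := by
  intro k
  induction k with
  | zero => simp
  | succ k ih =>
    have hdil : dilate (1/t) (ind (t ^ k)) = ind (t ^ (k+1)) := by
      rw [dilate_ind (by positivity) (pow_pos ht0 k) (pow_le_one₀ (le_of_lt ht0) (le_of_lt ht1))]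
      congr 1
      rw [div_div_eq_mul_div, div_one]
      ring
    have := (hadm (ind (t ^ k)) (mem_ind X _)).2
    rw [hdil] at this
    calc X.Nrm (ind (t ^ (k+1))) ≤ C * X.Nrm (ind (t ^ k)) := this
      _ ≤ C * (C ^ k * X.Nrm (ind 1)) := mul_le_mul_of_nonneg_left ih hC0
      _ = C ^ (k+1) * X.Nrm (ind 1) := by ring

lemma nrm_ind_one_le (X : BFS) {t C : ℝ} (ht : 1 < t) (hC0 : 0 ≤ C)
    (hadm : ∀ f, X.Mem f → X.Mem (dilate (1/t) f) ∧ X.Nrm (dilate (1/t) f) ≤ C * X.Nrm f) :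
    ∀ k : ℕ, X.Nrm (ind 1) ≤ C ^ k * X.Nrm (ind ((1/t) ^ k)) := by
  have ht0 : (0:ℝ) < t := by linarith
  have h1t : 0 < 1/t := by positivity
  have h1t1 : 1/t ≤ 1 := by rw [div_le_one ht0]; linarith
  intro k
  induction k with
  | zero => simp
  | succ k ih =>
    have hdil : dilate (1/t) (ind ((1/t) ^ (k+1))) = ind ((1/t) ^ k) := by
      rw [dilate_ind h1t (pow_pos h1t (k+1)) (pow_le_one₀ (le_of_lt h1t) h1t1)]
      congr 1
      have h1tne : (1:ℝ)/t ≠ 0 := ne_of_gt h1t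
      rw [pow_succ, mul_div_assoc, div_self h1tne, mul_one]
    have hb := (hadm (ind ((1/t) ^ (k+1))) (mem_ind X _)).2
    rw [hdil] at hb
    calc X.Nrm (ind 1) ≤ C ^ k * X.Nrm (ind ((1/t) ^ k)) := ih
      _ ≤ C ^ k * (C * X.Nrm (ind ((1/t) ^ (k+1)))) :=
          mul_le_mul_of_nonneg_left hb (pow_nonneg hC0 k)
      _ = C ^ (k+1) * X.Nrm (ind ((1/t) ^ (k+1))) := by ring

end FHTAux
namespace FHTAux

/-! ### Small sets have small indicator norm -/

def SmallSets (X : BFS) : Prop :=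
  ∀ ε : ℝ, 0 < ε → ∃ δ : ℝ≥0∞, 0 < δ ∧ ∀ E : Set ℝ, MeasurableSet E → vol E ≤ δ →
    X.Nrm (E.indicator (fun _ => (1:ℝ))) ≤ ε

lemma smallSets (X : BFS) (hri : RearrInvariant X) (hB : NontrivialBoyd X) : SmallSets X := by
  obtain ⟨t, C, ht0, ht1, hC0, hC1, hadm⟩ := exists_compress X hB
  intro ε hε
  have hN : 0 ≤ X.Nrm (ind 1) := X.nrm_nonneg _ (mem_ind X 1)
  have htend : Tendsto (fun k : ℕ => C ^ k * X.Nrm (ind 1)) atTop (𝓝 0) := by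
    have := tendsto_pow_atTop_nhds_zero_of_lt_one hC0 hC1
    simpa using this.mul_const (X.Nrm (ind 1))
  obtain ⟨k, hk⟩ := (htend.eventually_lt_const hε).exists
  refine ⟨ENNReal.ofReal (2 * t ^ k), ENNReal.ofReal_pos.mpr (by positivity), ?_⟩
  intro E hE hvE
  rw [nrm_indicator_eq' X hri hE]
  have hle2 : ENNReal.ofReal (2 * t ^ k) ≤ 2 := by
    rw [show (2:ℝ≥0∞) = ENNReal.ofReal 2 by exact (ENNReal.ofReal_ofNat 2).symm]
    apply ENNReal.ofReal_le_ofReal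
    nlinarith [pow_pos ht0 k, pow_le_one₀ (le_of_lt ht0) (le_of_lt ht1) (n := k)]
  calc Phi X (vol E) ≤ Phi X (ENNReal.ofReal (2 * t ^ k)) := Phi_mono X hvE hle2
    _ = X.Nrm (ind (t ^ k)) := by
        unfold Phi
        congr 1
        rw [ENNReal.toReal_ofReal (by positivity)]
        ring
    _ ≤ C ^ k * X.Nrm (ind 1) := nrm_ind_pow_le X ht0 ht1 hC0 hadm k
    _ ≤ ε := le_of_lt hk

/-! ### Chebyshev-type inequality for the norm -/

lemma cheb (X : BFS) (h : ℝ → ℝ) (hh : X.Mem h) {lam : ℝ} (hlam : 0 < lam) {E : Set ℝ}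
    (hE : MeasurableSet E) (hEsub : ∀ᵐ x ∂vol, x ∈ E → lam ≤ |h x|) :
    lam * X.Nrm (E.indicator (fun _ => (1:ℝ))) ≤ X.Nrm h := by
  have hsmul : X.Nrm (lam • E.indicator (fun _ => (1:ℝ))) =
      lam * X.Nrm (E.indicator (fun _ => (1:ℝ))) := by
    rw [X.nrm_smul lam _ (mem_indicator X hE), abs_of_pos hlam]
  rw [← hsmul]
  refine X.nrm_mono _ h (X.smul_mem lam _ (mem_indicator X hE)) hh ?_
  filter_upwards [hEsub] with x hx
  by_cases hxE : x ∈ E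
  · have : (lam • E.indicator (fun _ => (1:ℝ))) x = lam := by
      simp [Set.indicator_of_mem hxE]
    rw [this, abs_of_pos hlam]
    exact hx hxE
  · have : (lam • E.indicator (fun _ => (1:ℝ))) x = 0 := by
      simp [Set.indicator_of_notMem hxE]
    rw [this, abs_zero]
    exact abs_nonneg _

/-! ### Members are integrable -/

lemma integrable_of_mem (X : BFS) (hri : RearrInvariant X) (hB : NontrivialBoyd X)
    (h : ℝ → ℝ) (hh : X.Mem h) : Integrable h vol := by
  obtain ⟨t, C, ht, hC1, hCt, hadm⟩ := exists_stretch X hB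
  have ht0 : (0:ℝ) < t := by linarith
  have hC0 : (0:ℝ) ≤ C := by linarith
  set N₁ := X.Nrm (ind 1) with hN₁
  have hN₁pos : 0 < N₁ := nrm_ind_pos X one_pos
  have hmeas := X.mem_aemeasurable h hh
  set w := hmeas.mk h with hwdef
  have hw : Measurable w := hmeas.measurable_mk
  have hwe : h =ᵐ[vol] w := hmeas.ae_eq_mk
  set N := X.Nrm h with hNdef
  have hN : 0 ≤ N := X.nrm_nonneg h hh
  set R := 2 * (N + 1) / N₁ with hR
  have hRpos : 0 < R := by positivity
  set lam : ℕ → ℝ := fun k => R * C ^ (k + 1) with hlam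
  have hlampos : ∀ k, 0 < lam k := fun k => by
    simp only [hlam]; positivity
  have hlamtend : Tendsto lam atTop atTop := by
    have h1 := tendsto_pow_atTop_atTop_of_one_lt hC1
    have h2 : Tendsto (fun k : ℕ => C ^ (k + 1)) atTop atTop :=
      h1.comp (tendsto_add_atTop_nat 1)
    exact h2.const_mul_atTop hRpos
  set Ek : ℕ → Set ℝ := fun k => {x | lam k < |w x|} with hEk
  have hEkmeas : ∀ k, MeasurableSet (Ek k) :=
    fun k => measurableSet_lt measurable_const hw.abs
  have hkey : ∀ k, vol (Ek k) ≤ ENNReal.ofReal (2 * (1/t) ^ k) := by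
    intro k
    by_contra hlt
    push_neg at hlt
    have hchain : N₁ ≤ C ^ k * X.Nrm ((Ek k).indicator (fun _ => (1:ℝ))) := by
      calc N₁ ≤ C ^ k * X.Nrm (ind ((1/t) ^ k)) := nrm_ind_one_le X ht hC0 hadm k
        _ = C ^ k * Phi X (ENNReal.ofReal (2 * (1/t) ^ k)) := by
            unfold Phi
            congr 2
            rw [ENNReal.toReal_ofReal (by positivity)]
            ring
        _ ≤ C ^ k * Phi X (vol (Ek k)) := by
            apply mul_le_mul_of_nonneg_left _ (pow_nonneg hC0 k)
            exact Phi_mono X (le_of_lt hlt) (vol_le_two _)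
        _ = C ^ k * X.Nrm ((Ek k).indicator (fun _ => (1:ℝ))) := by
            rw [nrm_indicator_eq' X hri (hEkmeas k)]
    have hcheb : lam k * X.Nrm ((Ek k).indicator (fun _ => (1:ℝ))) ≤ N := by
      apply cheb X h hh (hlampos k) (hEkmeas k)
      filter_upwards [hwe] with x hx hxE
      rw [hx]
      exact le_of_lt hxE
    have hNrmχ : 0 ≤ X.Nrm ((Ek k).indicator (fun _ => (1:ℝ))) :=
      X.nrm_nonneg _ (mem_indicator X (hEkmeas k))
    -- lam k * N₁ ≤ lam k * (C^k * Nrmχ) = C^k * (lam k * Nrmχ) ≤ C^k * N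
    have h1 : lam k * N₁ ≤ C ^ k * N := by
      calc lam k * N₁ ≤ lam k * (C ^ k * X.Nrm ((Ek k).indicator (fun _ => (1:ℝ)))) :=
            mul_le_mul_of_nonneg_left hchain (le_of_lt (hlampos k))
        _ = C ^ k * (lam k * X.Nrm ((Ek k).indicator (fun _ => (1:ℝ)))) := by ring
        _ ≤ C ^ k * N := mul_le_mul_of_nonneg_left hcheb (pow_nonneg hC0 k)
    have h2 : lam k * N₁ = C ^ k * (R * C * N₁) := by
      simp only [hlam]; ring
    have h3 : R * C * N₁ ≤ N := by
      have hCk : (0:ℝ) < C ^ k := pow_pos (by linarith) k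
      nlinarith
    have h4 : R * N₁ = 2 * (N + 1) := by
      rw [hR]; field_simp
    nlinarith
  -- pointwise domination
  set S : ℝ → ℝ≥0∞ := fun x => ENNReal.ofReal (lam 0) +
    ∑' k, (Ek k).indicator (fun _ => ENNReal.ofReal (lam (k+1))) x with hS
  have hpt : ∀ x, ENNReal.ofReal |w x| ≤ S x := by
    intro x
    by_cases h0 : |w x| ≤ lam 0
    · exact le_trans (ENNReal.ofReal_le_ofReal h0) le_self_add
    · push_neg at h0
      obtain ⟨K, hK⟩ := (hlamtend.eventually_ge_atTop |w x|).exists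
      have hex : ∃ n, |w x| ≤ lam n := ⟨K, hK⟩
      set n := Nat.find hex with hn
      have hnle : |w x| ≤ lam n := Nat.find_spec hex
      have hnpos : 0 < n := by
        rcases Nat.eq_zero_or_pos n with h | h
        · exfalso; rw [h] at hnle; exact absurd hnle (not_le.mpr h0)
        · exact h
      set k := n - 1 with hk
      have hnk : n = k + 1 := (Nat.succ_pred_eq_of_pos hnpos).symm
      have hklt : lam k < |w x| := by
        have := Nat.find_min hex (show k < n by omega)
        push_neg at this
        exact this
      have hxE : x ∈ Ek k := hklt
      calc ENNReal.ofReal |w x| ≤ ENNReal.ofReal (lam (k+1)) :=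
            ENNReal.ofReal_le_ofReal (hnk ▸ hnle)
        _ = (Ek k).indicator (fun _ => ENNReal.ofReal (lam (k+1))) x := by
            rw [Set.indicator_of_mem hxE]
        _ ≤ ∑' j, (Ek j).indicator (fun _ => ENNReal.ofReal (lam (j+1))) x :=
            ENNReal.le_tsum k
        _ ≤ S x := le_add_self
  have hSint : ∫⁻ x, S x ∂vol < ⊤ := by
    rw [hS]
    simp only
    rw [lintegral_add_left measurable_const]
    rw [lintegral_tsum (fun k => (measurable_const.indicator (hEkmeas k)).aemeasurable)]
    have hconst : ∫⁻ _, ENNReal.ofReal (lam 0) ∂vol = ENNReal.ofReal (lam 0) * 2 := by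
      rw [lintegral_const, vol_univ_eq]
    have hterm : ∀ k, ∫⁻ x, (Ek k).indicator (fun _ => ENNReal.ofReal (lam (k+1))) x ∂vol
        ≤ ENNReal.ofReal (2 * R * C ^ 2 * (C / t) ^ k) := by
      intro k
      rw [lintegral_indicator (hEkmeas k), setLIntegral_const]
      calc ENNReal.ofReal (lam (k+1)) * vol (Ek k)
          ≤ ENNReal.ofReal (lam (k+1)) * ENNReal.ofReal (2 * (1/t) ^ k) :=
            mul_le_mul_right (hkey k) _
        _ = ENNReal.ofReal (lam (k+1) * (2 * (1/t) ^ k)) := by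
            rw [ENNReal.ofReal_mul (le_of_lt (hlampos (k+1)))]
        _ = ENNReal.ofReal (2 * R * C ^ 2 * (C / t) ^ k) := by
            congr 1
            simp only [hlam]
            have htne : t ≠ 0 := ne_of_gt ht0
            field_simp
            ring
    have hgeom : ∑' k, ENNReal.ofReal (2 * R * C ^ 2 * (C / t) ^ k) < ⊤ := by
      have hrw : ∀ k, ENNReal.ofReal (2 * R * C ^ 2 * (C / t) ^ k) =
          ENNReal.ofReal (2 * R * C ^ 2) * (ENNReal.ofReal (C / t)) ^ k := by
        intro k
        rw [ENNReal.ofReal_mul (by positivity), ENNReal.ofReal_pow (by positivity)]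
      simp only [hrw]
      rw [ENNReal.tsum_mul_left, ENNReal.tsum_geometric]
      apply ENNReal.mul_lt_top ENNReal.ofReal_lt_top
      rw [lt_top_iff_ne_top, Ne, ENNReal.inv_eq_top, tsub_eq_zero_iff_le, not_le]
      exact ENNReal.ofReal_lt_one.mpr (by rw [div_lt_one ht0]; exact hCt)
    rw [lintegral_const, vol_univ_eq]
    calc ENNReal.ofReal (lam 0) * 2 +
          ∑' k, ∫⁻ x, (Ek k).indicator (fun _ => ENNReal.ofReal (lam (k+1))) x ∂vol
        ≤ ENNReal.ofReal (lam 0) * 2 +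
          ∑' k, ENNReal.ofReal (2 * R * C ^ 2 * (C / t) ^ k) :=
          add_le_add le_rfl (ENNReal.tsum_le_tsum hterm)
      _ < ⊤ := by
          apply ENNReal.add_lt_top.mpr
          exact ⟨ENNReal.mul_lt_top ENNReal.ofReal_lt_top ENNReal.ofNat_lt_top, hgeom⟩
  have hwint : Integrable w vol := by
    refine ⟨hw.aestronglyMeasurable, ?_⟩
    rw [hasFiniteIntegral_iff_norm]
    calc ∫⁻ x, ENNReal.ofReal ‖w x‖ ∂vol = ∫⁻ x, ENNReal.ofReal |w x| ∂vol := by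
          apply lintegral_congr
          intro x
          rw [Real.norm_eq_abs]
      _ ≤ ∫⁻ x, S x ∂vol := lintegral_mono hpt
      _ < ⊤ := hSint
  exact hwint.congr hwe.symm

end FHTAux
namespace FHTAux

/-! ### Norm smallness from uniform bound plus small `L¹` norm -/

lemma nrm_small (X : BFS) (hsm : SmallSets X) {ε B : ℝ} (hε : 0 < ε) (hB : 0 ≤ B) :
    ∃ τ : ℝ, 0 < τ ∧ ∀ u : ℝ → ℝ, X.Mem u → (∀ᵐ x ∂vol, |u x| ≤ B) →
      (∫⁻ x, ENNReal.ofReal |u x| ∂vol) ≤ ENNReal.ofReal τ → X.Nrm u ≤ ε := by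
  set N₁ := X.Nrm (fun _ => (1:ℝ)) with hN₁
  have hN₁0 : 0 ≤ N₁ := X.nrm_nonneg _ (mem_const X 1)
  set δ₁ := ε / (2 * (N₁ + 1)) with hδ₁
  have hδ₁pos : 0 < δ₁ := by positivity
  obtain ⟨δ, hδpos, hδ⟩ := hsm (ε / (2 * (B + 1))) (by positivity)
  set δ' := min δ 1 with hδ'
  have hδ'pos : 0 < δ' := lt_min hδpos one_pos
  have hδ'top : δ' ≠ ⊤ := ne_top_of_le_ne_top ENNReal.one_ne_top (min_le_right _ _)
  have hδ't : 0 < δ'.toReal := ENNReal.toReal_pos (ne_of_gt hδ'pos) hδ'top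
  refine ⟨δ₁ * δ'.toReal, by positivity, ?_⟩
  intro u hu hub hint
  have hmeas := X.mem_aemeasurable u hu
  set w := hmeas.mk u with hwdef
  have hw : Measurable w := hmeas.measurable_mk
  have hwe : u =ᵐ[vol] w := hmeas.ae_eq_mk
  set E := {x | δ₁ < |w x|} with hE
  have hEmeas : MeasurableSet E := measurableSet_lt measurable_const hw.abs
  have hEvol : vol E ≤ δ := by
    have hsub : E ⊆ {x | ENNReal.ofReal δ₁ ≤ ENNReal.ofReal |w x|} := by
      intro x hx
      exact ENNReal.ofReal_le_ofReal (le_of_lt hx)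
    have hcheb := meas_ge_le_lintegral_div
      (μ := vol) (f := fun x => ENNReal.ofReal |w x|)
      ((ENNReal.measurable_ofReal.comp hw.abs).aemeasurable)
      (ε := ENNReal.ofReal δ₁) (ne_of_gt (ENNReal.ofReal_pos.mpr hδ₁pos))
      ENNReal.ofReal_ne_top
    have hintw : ∫⁻ x, ENNReal.ofReal |w x| ∂vol ≤ ENNReal.ofReal (δ₁ * δ'.toReal) := by
      rw [show ∫⁻ x, ENNReal.ofReal |w x| ∂vol = ∫⁻ x, ENNReal.ofReal |u x| ∂vol from
        lintegral_congr_ae (by filter_upwards [hwe] with x hx; rw [hx])]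
      exact hint
    calc vol E ≤ vol {x | ENNReal.ofReal δ₁ ≤ ENNReal.ofReal |w x|} := measure_mono hsub
      _ ≤ (∫⁻ x, ENNReal.ofReal |w x| ∂vol) / ENNReal.ofReal δ₁ := hcheb
      _ ≤ ENNReal.ofReal (δ₁ * δ'.toReal) / ENNReal.ofReal δ₁ :=
          ENNReal.div_le_div_right hintw _
      _ = δ' := by
          rw [← ENNReal.ofReal_div_of_pos hδ₁pos, mul_comm,
            mul_div_assoc, div_self (ne_of_gt hδ₁pos), mul_one,
            ENNReal.ofReal_toReal hδ'top]
      _ ≤ δ := min_le_left _ _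
  have hχ := hδ E hEmeas hEvol
  set d : ℝ → ℝ := (fun _ => δ₁) + B • E.indicator (fun _ => (1:ℝ)) with hd
  have hdmem : X.Mem d := X.add_mem _ _ (mem_const X δ₁)
    (X.smul_mem B _ (mem_indicator X hEmeas))
  have hdom : ∀ᵐ x ∂vol, |u x| ≤ |d x| := by
    filter_upwards [hub, hwe] with x hxb hxe
    by_cases hxE : x ∈ E
    · have : d x = δ₁ + B := by
        simp only [hd, Pi.add_apply, Pi.smul_apply, smul_eq_mul,
          Set.indicator_of_mem hxE, mul_one]
      rw [this, abs_of_nonneg (add_nonneg (le_of_lt hδ₁pos) hB)]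
      linarith
    · have : d x = δ₁ := by
        simp only [hd, Pi.add_apply, Pi.smul_apply, smul_eq_mul,
          Set.indicator_of_notMem hxE, mul_zero, add_zero]
      rw [this, abs_of_pos hδ₁pos, hxe]
      rw [hE, Set.mem_setOf_eq, not_lt] at hxE
      exact hxE
  calc X.Nrm u ≤ X.Nrm d := X.nrm_mono u d hu hdmem hdom
    _ ≤ X.Nrm (fun _ => δ₁) + X.Nrm (B • E.indicator (fun _ => (1:ℝ))) :=
        X.nrm_add_le _ _ (mem_const X δ₁) (X.smul_mem B _ (mem_indicator X hEmeas))
    _ ≤ δ₁ * N₁ + B * (ε / (2 * (B + 1))) := by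
        apply add_le_add
        · rw [nrm_const X δ₁, abs_of_pos hδ₁pos]
        · rw [X.nrm_smul B _ (mem_indicator X hEmeas), abs_of_nonneg hB]
          exact mul_le_mul_of_nonneg_left hχ hB
    _ ≤ ε := by
        have h1 : δ₁ * N₁ ≤ ε / 2 := by
          rw [hδ₁]
          rw [div_mul_eq_mul_div, div_le_div_iff₀ (by positivity) (by norm_num)]
          nlinarith
        have h2 : B * (ε / (2 * (B + 1))) ≤ ε / 2 := by
          have hrw : B * (ε / (2 * (B + 1))) = B * ε / (2 * (B + 1)) := by ring
          rw [hrw, div_le_div_iff₀ (by positivity) (by norm_num)]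
          nlinarith
        linarith

/-! ### Lemma D: uniformly bounded a.e. null sequences have null norms -/

lemma nrm_tendsto_zero (X : BFS) (hsm : SmallSets X) (g : ℕ → ℝ → ℝ) (M : ℝ) (hM : 0 ≤ M)
    (hmem : ∀ n, X.Mem (g n)) (hbd : ∀ n, ∀ᵐ x ∂vol, |g n x| ≤ M)
    (hten : ∀ᵐ x ∂vol, Tendsto (fun n => g n x) atTop (𝓝 0)) :
    Tendsto (fun n => X.Nrm (g n)) atTop (𝓝 0) := by
  rw [NormedAddCommGroup.tendsto_nhds_zero]
  intro ε hε
  obtain ⟨τ, hτpos, hτ⟩ := nrm_small X hsm (half_pos hε) hM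
  have htim : TendstoInMeasure vol g atTop (fun _ => (0:ℝ)) := by
    apply tendstoInMeasure_of_tendsto_ae
    · intro n; exact (X.mem_aemeasurable _ (hmem n)).aestronglyMeasurable
    · exact hten
  set δ₂ := τ / 4 with hδ₂
  have hδ₂pos : 0 < δ₂ := by positivity
  set κ := ENNReal.ofReal (τ / (2 * (M + 1))) with hκ
  have hκpos : 0 < κ := ENNReal.ofReal_pos.mpr (by positivity)
  have hmeassmall := (tendstoInMeasure_iff_dist.mp htim δ₂ hδ₂pos).eventually_lt_const hκpos
  filter_upwards [hmeassmall] with n hn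
  have hnn : 0 ≤ X.Nrm (g n) := X.nrm_nonneg _ (hmem n)
  rw [Real.norm_eq_abs, abs_of_nonneg hnn]
  refine lt_of_le_of_lt (hτ (g n) (hmem n) (hbd n) ?_) (by linarith)
  -- ∫⁻ |g n| ≤ ofReal τ
  have hmeasg := X.mem_aemeasurable _ (hmem n)
  set w := hmeasg.mk (g n) with hwdef
  have hw : Measurable w := hmeasg.measurable_mk
  have hwe : g n =ᵐ[vol] w := hmeasg.ae_eq_mk
  set F := {x | δ₂ ≤ |w x|} with hF
  have hFmeas : MeasurableSet F := measurableSet_le measurable_const hw.abs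
  have hFvol : vol F < κ := by
    have hae : F =ᵐ[vol] {x | δ₂ ≤ dist (g n x) ((fun _ => (0:ℝ)) x)} := by
      rw [eventuallyEq_set]
      filter_upwards [hwe] with x hx
      simp only [hF, Set.mem_setOf_eq, dist_zero_right, Real.norm_eq_abs, hx]
    rw [measure_congr hae]
    exact hn
  have hptw : ∀ᵐ x ∂vol, ENNReal.ofReal |g n x| ≤
      ENNReal.ofReal δ₂ + F.indicator (fun _ => ENNReal.ofReal M) x := by
    filter_upwards [hbd n, hwe] with x hxb hxe
    by_cases hxF : x ∈ F
    · rw [Set.indicator_of_mem hxF]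
      calc ENNReal.ofReal |g n x| ≤ ENNReal.ofReal M := ENNReal.ofReal_le_ofReal hxb
        _ ≤ _ := le_add_self
    · rw [Set.indicator_of_notMem hxF, add_zero]
      apply ENNReal.ofReal_le_ofReal
      rw [hxe]
      rw [hF, Set.mem_setOf_eq, not_le] at hxF
      exact le_of_lt hxF
  calc ∫⁻ x, ENNReal.ofReal |g n x| ∂vol
      ≤ ∫⁻ x, (ENNReal.ofReal δ₂ + F.indicator (fun _ => ENNReal.ofReal M) x) ∂vol :=
        lintegral_mono_ae hptw
    _ = ENNReal.ofReal δ₂ * 2 + ENNReal.ofReal M * vol F := by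
        rw [lintegral_add_left measurable_const, lintegral_const, vol_univ_eq,
          lintegral_indicator hFmeas, setLIntegral_const]
    _ ≤ ENNReal.ofReal (τ/2) + ENNReal.ofReal (τ/2) := by
        apply add_le_add
        · rw [show (2:ℝ≥0∞) = ENNReal.ofReal 2 from (ENNReal.ofReal_ofNat 2).symm,
            ← ENNReal.ofReal_mul (le_of_lt hδ₂pos)]
          apply ENNReal.ofReal_le_ofReal
          rw [hδ₂]; linarith
        · calc ENNReal.ofReal M * vol F ≤ ENNReal.ofReal M * κ :=
              mul_le_mul_right (le_of_lt hFvol) _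
            _ = ENNReal.ofReal (M * (τ / (2 * (M + 1)))) := by
                rw [ENNReal.ofReal_mul hM]
            _ ≤ ENNReal.ofReal (τ/2) := by
                apply ENNReal.ofReal_le_ofReal
                rw [show M * (τ / (2 * (M + 1))) = M * τ / (2 * (M+1)) by ring,
                  div_le_div_iff₀ (by positivity) (by norm_num)]
                nlinarith
    _ = ENNReal.ofReal τ := by
        rw [← ENNReal.ofReal_add (by positivity) (by positivity)]
        norm_num

end FHTAux
namespace FHTAux

/-! ### Clamp -/

def clamp (m v : ℝ) : ℝ := max (-m) (min v m)

lemma clamp_zero {m : ℝ} (hm : 0 ≤ m) : clamp m 0 = 0 := by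
  unfold clamp
  rw [min_eq_left hm, max_eq_right (by linarith)]

lemma abs_clamp_le {m : ℝ} (hm : 0 ≤ m) (v : ℝ) : |clamp m v| ≤ m := by
  unfold clamp
  rw [abs_le]
  constructor
  · exact le_max_left _ _
  · exact max_le (by linarith) (min_le_right _ _)

lemma clamp_eq_self {m v : ℝ} (hv : |v| ≤ m) : clamp m v = v := by
  rw [abs_le] at hv
  unfold clamp
  rw [min_eq_left hv.2, max_eq_right hv.1]

lemma abs_min_sub_min (c a b : ℝ) : |min a c - min b c| ≤ |a - b| := by
  rw [abs_sub_le_iff]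
  rcases le_total a c with h1 | h1 <;> rcases le_total b c with h2 | h2
  · rw [min_eq_left h1, min_eq_left h2]
    exact ⟨le_abs_self _, neg_le_abs _ |>.trans_eq' (by rw [neg_sub])⟩
  · rw [min_eq_left h1, min_eq_right h2]
    constructor
    · calc a - c ≤ 0 := by linarith
        _ ≤ |a - b| := abs_nonneg _
    · calc c - a ≤ b - a := by linarith
        _ ≤ |a - b| := by rw [abs_sub_comm]; exact le_abs_self _
  · rw [min_eq_right h1, min_eq_left h2]
    constructor
    · calc c - b ≤ a - b := by linarith
        _ ≤ |a - b| := le_abs_self _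
    · calc b - c ≤ 0 := by linarith
        _ ≤ |a - b| := abs_nonneg _
  · rw [min_eq_right h1, min_eq_right h2]
    simp [abs_nonneg]

lemma abs_max_sub_max (c a b : ℝ) : |max c a - max c b| ≤ |a - b| := by
  rw [abs_sub_le_iff]
  rcases le_total c a with h1 | h1 <;> rcases le_total c b with h2 | h2
  · rw [max_eq_right h1, max_eq_right h2]
    exact ⟨le_abs_self _, by rw [abs_sub_comm]; exact le_abs_self _⟩
  · rw [max_eq_right h1, max_eq_left h2]
    constructor
    · calc a - c ≤ a - b := by linarith
        _ ≤ |a - b| := le_abs_self _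
    · calc c - a ≤ 0 := by linarith
        _ ≤ |a - b| := abs_nonneg _
  · rw [max_eq_left h1, max_eq_right h2]
    constructor
    · calc c - b ≤ 0 := by linarith
        _ ≤ |a - b| := abs_nonneg _
    · calc b - c ≤ b - a := by linarith
        _ ≤ |a - b| := by rw [abs_sub_comm]; exact le_abs_self _
  · rw [max_eq_left h1, max_eq_left h2]
    simp [abs_nonneg]

lemma abs_clamp_sub_clamp (m a b : ℝ) : |clamp m a - clamp m b| ≤ |a - b| := by
  unfold clamp
  calc |max (-m) (min a m) - max (-m) (min b m)| ≤ |min a m - min b m| :=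
      abs_max_sub_max (-m) _ _
    _ ≤ |a - b| := abs_min_sub_min m a b

lemma abs_sub_clamp (m v : ℝ) (hm : 0 ≤ m) : |v - clamp m v| = max (|v| - m) 0 := by
  unfold clamp
  rcases le_total v (-m) with h1 | h1
  · rw [min_eq_left (by linarith), max_eq_left (by linarith)]
    rw [abs_of_nonpos (by linarith), abs_of_nonpos (by linarith)]
    rw [max_eq_left (by linarith)]
    ring
  · rcases le_total m v with h2 | h2
    · rw [min_eq_right h2, max_eq_right (by linarith)]
      rw [abs_of_nonneg (by linarith), abs_of_nonneg (by linarith)]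
      rw [max_eq_left (by linarith)]
    · rw [min_eq_left h2, max_eq_right h1]
      rw [sub_self, abs_zero]
      rw [max_eq_right]
      have : |v| ≤ m := abs_le.mpr ⟨h1, h2⟩
      linarith

end FHTAux
namespace FHTAux

/-! ### Truncation via order continuity -/

lemma trunc_approx (X : BFS) (f : ℝ → ℝ) (hf : OCPart X.Mem X.Nrm f) {η : ℝ} (hη : 0 < η) :
    ∃ m : ℝ, 0 ≤ m ∧ X.Mem (fun x => clamp m (f x)) ∧ (∀ x, |clamp m (f x)| ≤ m) ∧
      X.Mem (fun y => f y - clamp m (f y)) ∧ X.Nrm (fun y => f y - clamp m (f y)) < η := by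
  have hfm := X.mem_aemeasurable f hf.1
  set h : ℕ → ℝ → ℝ := fun n x => max (|f x| - n) 0 with hh
  have habs : AEMeasurable (fun x => |f x|) vol := measurable_abs.comp_aemeasurable hfm
  have hmeas : ∀ n : ℕ, AEMeasurable (h n) vol := fun n =>
    (habs.sub aemeasurable_const).max aemeasurable_const
  have hle : ∀ n x, |h n x| ≤ |f x| := by
    intro n x
    rw [abs_of_nonneg (le_max_right _ _)]
    exact max_le (sub_le_self _ (Nat.cast_nonneg n)) (abs_nonneg _)
  have hmem : ∀ n, X.Mem (h n) := fun n =>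
    X.ideal_mem f (h n) hf.1 (hmeas n) (Filter.Eventually.of_forall (hle n))
  have hcond : ∀ n, ∀ᵐ x ∂vol, 0 ≤ h n x ∧ h (n+1) x ≤ h n x ∧ h n x ≤ |f x| := by
    intro n
    filter_upwards with x
    refine ⟨le_max_right _ _, ?_, ?_⟩
    · apply max_le _ (le_max_right _ _)
      apply le_trans _ (le_max_left _ _)
      push_cast
      linarith
    · calc h n x = |h n x| := (abs_of_nonneg (le_max_right _ _)).symm
        _ ≤ |f x| := hle n x
  have htend : ∀ᵐ x ∂vol, Tendsto (fun n => h n x) atTop (𝓝 0) := by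
    filter_upwards with x
    obtain ⟨N, hN⟩ := exists_nat_ge (|f x|)
    apply tendsto_atTop_of_eventually_const (i₀ := N)
    intro i hi
    simp only [hh]
    rw [max_eq_right]
    have : (N:ℝ) ≤ i := by exact_mod_cast hi
    linarith
  have hNrm := hf.2 h hmem hcond htend
  obtain ⟨m₀, hm₀⟩ := (hNrm.eventually_lt_const hη).exists
  set m : ℝ := (m₀ : ℝ) with hm
  have hm0 : 0 ≤ m := Nat.cast_nonneg _
  have hbm : AEMeasurable (fun x => clamp m (f x)) vol := by
    unfold clamp
    exact aemeasurable_const.max (hfm.min aemeasurable_const)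
  have hbmem : X.Mem (fun x => clamp m (f x)) :=
    mem_of_bound X _ m hm0 hbm (Filter.Eventually.of_forall fun x => abs_clamp_le hm0 _)
  have hid : ∀ x, |f x - clamp m (f x)| = h m₀ x := fun x => abs_sub_clamp m (f x) hm0
  have hdmem : X.Mem (fun y => f y - clamp m (f y)) := by
    refine X.ideal_mem f _ hf.1 (hfm.sub hbm) ?_
    filter_upwards with x
    calc |f x - clamp m (f x)| = h m₀ x := hid x
      _ = |h m₀ x| := (abs_of_nonneg (le_max_right _ _)).symm
      _ ≤ |f x| := hle m₀ x
  refine ⟨m, hm0, hbmem, fun x => abs_clamp_le hm0 _, hdmem, ?_⟩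
  calc X.Nrm (fun y => f y - clamp m (f y)) ≤ X.Nrm (h m₀) := by
        apply X.nrm_mono _ _ hdmem (hmem m₀)
        filter_upwards with x
        rw [hid x, abs_of_nonneg (le_max_right _ _)]
    _ < η := hm₀

/-! ### McShane Lipschitz approximation -/

lemma mcshane (g₂ : ℝ → ℝ) (m : ℝ) (hm : 0 ≤ m) (hb : ∀ x, |g₂ x| ≤ m)
    (hu : UniformContinuous g₂) {τ : ℝ} (hτ : 0 < τ) :
    ∃ (ψ₀ : ℝ → ℝ) (L : ℝ), 0 ≤ L ∧ (∀ x y, |ψ₀ x - ψ₀ y| ≤ L * |x - y|) ∧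
      (∀ x, |ψ₀ x| ≤ m) ∧ (∀ x, |ψ₀ x - g₂ x| ≤ τ) := by
  rw [Metric.uniformContinuous_iff] at hu
  obtain ⟨δ, hδpos, hδ⟩ := hu τ hτ
  set L : ℝ := (2*m + 1)/(δ/2) with hL
  have hLpos : 0 < L := by positivity
  set ψ₀ : ℝ → ℝ := fun x => ⨅ y : ℝ, (g₂ y + L * |x - y|) with hψ₀
  have hbdd : ∀ x : ℝ, BddBelow (Set.range fun y => g₂ y + L * |x - y|) := by
    intro x
    refine ⟨-m, ?_⟩
    rintro _ ⟨y, rfl⟩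
    show -m ≤ g₂ y + L * |x - y|
    have h1 : -m ≤ g₂ y := (abs_le.mp (hb y)).1
    have h2 : 0 ≤ L * |x - y| := by positivity
    linarith
  have hle_self : ∀ x, ψ₀ x ≤ g₂ x := by
    intro x
    have := ciInf_le (hbdd x) x
    simpa using this
  have hlb : ∀ x y, -m ≤ g₂ y + L * |x - y| := by
    intro x y
    have h1 : -m ≤ g₂ y := (abs_le.mp (hb y)).1
    have h2 : 0 ≤ L * |x - y| := by positivity
    linarith
  have hge : ∀ x, g₂ x - τ ≤ ψ₀ x := by
    intro x
    apply le_ciInf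
    intro y
    show g₂ x - τ ≤ g₂ y + L * |x - y|
    rcases le_total (dist x y) (δ/2) with hxy | hxy
    · have hdist : dist x y < δ := by linarith
      have := hδ hdist
      rw [Real.dist_eq] at this
      have h1 : g₂ x - g₂ y ≤ τ := le_of_lt (lt_of_abs_lt this)
      have h2 : 0 ≤ L * |x - y| := by positivity
      linarith
    · have h1 : -m ≤ g₂ y := (abs_le.mp (hb y)).1
      have h2 : g₂ x ≤ m := (abs_le.mp (hb x)).2
      have h3 : L * (δ/2) ≤ L * |x - y| := by
        apply mul_le_mul_of_nonneg_left _ (le_of_lt hLpos)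
        rw [← Real.dist_eq]; exact hxy
      have h4 : L * (δ/2) = 2*m + 1 := by
        rw [hL]; field_simp
      nlinarith
  have hlip2 : ∀ x x', ψ₀ x ≤ ψ₀ x' + L * |x - x'| := by
    intro x x'
    rw [← sub_le_iff_le_add]
    apply le_ciInf
    intro y
    show ψ₀ x - L * |x - x'| ≤ g₂ y + L * |x' - y|
    have h1 : ψ₀ x ≤ g₂ y + L * |x - y| := ciInf_le (hbdd x) y
    have h2 : |x - y| ≤ |x - x'| + |x' - y| := abs_sub_le x x' y
    nlinarith
  refine ⟨ψ₀, L, le_of_lt hLpos, ?_, ?_, ?_⟩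
  · intro x y
    rw [abs_sub_le_iff]
    constructor
    · have := hlip2 x y; linarith
    · have := hlip2 y x; rw [abs_sub_comm]; linarith
  · intro x
    rw [abs_le]
    constructor
    · exact le_ciInf (fun y => hlb x y)
    · exact le_trans (hle_self x) ((abs_le.mp (hb x)).2)
  · intro x
    rw [abs_le]
    constructor
    · have := hge x; linarith
    · have := hle_self x; linarith

/-! ### Cutoff -/

lemma cutoff {κ : ℝ} (hκ0 : 0 < κ) :
    ∃ c : ℝ → ℝ, Continuous c ∧ (∀ x, 0 ≤ c x ∧ c x ≤ 1) ∧
      (∀ x y, |c x - c y| ≤ (1/κ) * |x - y|) ∧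
      (∀ x, 1 - κ ≤ |x| → c x = 0) ∧ (∀ x, |x| ≤ 1 - 2*κ → c x = 1) := by
  refine ⟨fun x => max 0 (min ((1 - κ - |x|)/κ) 1), ?_, ?_, ?_, ?_, ?_⟩
  · exact continuous_const.max ((((continuous_const.sub continuous_abs)).div_const κ).min
      continuous_const)
  · intro x
    constructor
    · exact le_max_left _ _
    · exact max_le zero_le_one (min_le_right _ _)
  · intro x y
    calc |max 0 (min ((1 - κ - |x|)/κ) 1) - max 0 (min ((1 - κ - |y|)/κ) 1)|
        ≤ |min ((1 - κ - |x|)/κ) 1 - min ((1 - κ - |y|)/κ) 1| := abs_max_sub_max 0 _ _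
      _ ≤ |(1 - κ - |x|)/κ - (1 - κ - |y|)/κ| := abs_min_sub_min 1 _ _
      _ = |(|y| - |x|)| / κ := by
          rw [div_sub_div_same, abs_div, abs_of_pos hκ0]
          congr 2
          ring
      _ ≤ (1/κ) * |x - y| := by
          rw [div_eq_mul_inv, mul_comm, one_div, ← mul_le_mul_iff_right₀ hκ0]
          rw [← mul_assoc, mul_inv_cancel₀ (ne_of_gt hκ0), one_mul]
          rw [← mul_assoc, mul_inv_cancel₀ (ne_of_gt hκ0), one_mul]
          calc |(|y| - |x|)| ≤ |y - x| := abs_abs_sub_abs_le_abs_sub y x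
            _ = |x - y| := abs_sub_comm y x
  · intro x hx
    show max 0 (min ((1 - κ - |x|)/κ) 1) = 0
    rw [max_eq_left]
    apply min_le_of_left_le
    apply div_nonpos_of_nonpos_of_nonneg _ (le_of_lt hκ0)
    linarith
  · intro x hx
    have h1 : (1:ℝ) ≤ (1 - κ - |x|)/κ := by
      rw [le_div_iff₀ hκ0]
      linarith
    show max 0 (min ((1 - κ - |x|)/κ) 1) = 1
    rw [min_eq_right h1, max_eq_right zero_le_one]

end FHTAux
namespace FHTAux

lemma approx (X : BFS) (hsm : SmallSets X) (f : ℝ → ℝ) (hf : OCPart X.Mem X.Nrm f)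
    {η : ℝ} (hη : 0 < η) :
    ∃ (ψ : ℝ → ℝ) (K : ℝ≥0) (m κ : ℝ), 0 < κ ∧ κ ≤ 1/4 ∧ 0 ≤ m ∧
      LipschitzWith K ψ ∧ (∀ x, |ψ x| ≤ m) ∧
      (∀ x, x ∉ Set.Icc (-(1-κ)) (1-κ) → ψ x = 0) ∧ X.Mem ψ ∧
      X.Nrm (fun y => f y - ψ y) < η := by
  obtain ⟨m, hm0, hbmem, hbbd, hdmem, hdnrm⟩ := trunc_approx X f hf (half_pos hη)
  set b : ℝ → ℝ := fun x => clamp m (f x) with hbdef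
  have hfm := X.mem_aemeasurable f hf.1
  have hbm : AEMeasurable b vol := by
    have : b = fun x => max (-m) (min (f x) m) := rfl
    rw [this]
    exact aemeasurable_const.max (hfm.min aemeasurable_const)
  obtain ⟨τ, hτpos, hτ⟩ := nrm_small X hsm (half_pos hη) (show (0:ℝ) ≤ 2*m by linarith)
  set τ₂ := τ/4 with hτ₂
  set τ₃ := τ/8 with hτ₃
  set κ := min (1/4) (τ/(16*(m+1))) with hκdef
  have hκ0 : 0 < κ := lt_min (by norm_num) (by positivity)
  have hκ14 : κ ≤ 1/4 := min_le_left _ _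
  -- continuous compactly supported approximation in L¹(volume)
  set bt : ℝ → ℝ := (Set.Ioo (-1:ℝ) 1).indicator b with hbtdef
  have hbtmeas : AEMeasurable bt volume := by
    rw [hbtdef, aemeasurable_indicator_iff measurableSet_Ioo]
    exact hbm
  have hbtbd : ∀ x, |bt x| ≤ m := by
    intro x
    rw [hbtdef]
    by_cases hx : x ∈ Set.Ioo (-1:ℝ) 1
    · rw [Set.indicator_of_mem hx]; exact hbbd x
    · rw [Set.indicator_of_notMem hx, abs_zero]; exact hm0
  have hbint : Integrable b vol := by
    refine Integrable.mono' (integrable_const m) hbm.aestronglyMeasurable ?_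
    filter_upwards with x
    rw [Real.norm_eq_abs]
    exact hbbd x
  have hbtint : Integrable bt volume := by
    rw [hbtdef, integrable_indicator_iff measurableSet_Ioo]
    exact hbint
  have hmemlp : MemLp bt 1 volume := memLp_one_iff_integrable.mpr hbtint
  obtain ⟨g, hgsupp, hgnorm, hgcont, -⟩ :=
    hmemlp.exists_hasCompactSupport_eLpNorm_sub_le ENNReal.one_ne_top
      (ε := ENNReal.ofReal τ₂) (ne_of_gt (ENNReal.ofReal_pos.mpr (by positivity)))
  -- clamp g
  set g₂ : ℝ → ℝ := fun x => clamp m (g x) with hg₂def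
  have hg₂cont : Continuous g₂ := by
    have : g₂ = fun x => max (-m) (min (g x) m) := rfl
    rw [this]
    exact continuous_const.max (hgcont.min continuous_const)
  have hg₂supp : HasCompactSupport g₂ := hgsupp.comp_left (g := clamp m) (clamp_zero hm0)
  have hg₂u : UniformContinuous g₂ := hg₂supp.uniformContinuous_of_continuous hg₂cont
  have hg₂bd : ∀ x, |g₂ x| ≤ m := fun x => abs_clamp_le hm0 _
  have hg₂err : ∀ x, |bt x - g₂ x| ≤ |bt x - g x| := by
    intro x
    have h1 : bt x = clamp m (bt x) := (clamp_eq_self (hbtbd x)).symm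
    calc |bt x - g₂ x| = |clamp m (bt x) - clamp m (g x)| := by rw [← h1]
      _ ≤ |bt x - g x| := abs_clamp_sub_clamp m _ _
  -- McShane
  obtain ⟨ψ₀, L, hL0, hψ₀lip, hψ₀bd, hψ₀err⟩ :=
    mcshane g₂ m hm0 hg₂bd hg₂u (τ := τ₃) (by positivity)
  have hψ₀cont : Continuous ψ₀ := by
    have : LipschitzWith (Real.toNNReal L) ψ₀ := by
      rw [lipschitzWith_iff_dist_le_mul]
      intro x y
      rw [Real.dist_eq, Real.dist_eq, Real.coe_toNNReal _ hL0]
      exact hψ₀lip x y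
    exact this.continuous
  -- cutoff
  obtain ⟨c, hccont, hcbd, hclip, hc0, hc1⟩ := cutoff hκ0
  set ψ : ℝ → ℝ := fun x => c x * ψ₀ x with hψdef
  have hψbd : ∀ x, |ψ x| ≤ m := by
    intro x
    rw [hψdef]
    calc |c x * ψ₀ x| = |c x| * |ψ₀ x| := abs_mul _ _
      _ ≤ 1 * m := by
          apply mul_le_mul _ (hψ₀bd x) (abs_nonneg _) zero_le_one
          rw [abs_of_nonneg (hcbd x).1]; exact (hcbd x).2
      _ = m := one_mul m
  have hψcont : Continuous ψ := hccont.mul hψ₀cont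
  have hψmem : X.Mem ψ := mem_of_bound X ψ m hm0 hψcont.measurable.aemeasurable
    (Filter.Eventually.of_forall hψbd)
  have hψlip : LipschitzWith (Real.toNNReal (L + m * (1/κ))) ψ := by
    rw [lipschitzWith_iff_dist_le_mul]
    intro x y
    rw [Real.dist_eq, Real.dist_eq, Real.coe_toNNReal _ (by positivity)]
    have hident : ψ x - ψ y = c x * (ψ₀ x - ψ₀ y) + ψ₀ y * (c x - c y) := by
      rw [hψdef]; ring
    have h5 : |ψ x - ψ y| ≤ |c x| * |ψ₀ x - ψ₀ y| + |ψ₀ y| * |c x - c y| := by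
      rw [hident]
      refine le_trans (abs_add_le _ _) ?_
      rw [abs_mul, abs_mul]
    have h6 : |c x| ≤ 1 := by rw [abs_of_nonneg (hcbd x).1]; exact (hcbd x).2
    have h7 := hψ₀lip x y
    have h8 := hψ₀bd y
    have h9 := hclip x y
    have h10 : (0:ℝ) ≤ |x - y| := abs_nonneg _
    have h11 : (0:ℝ) ≤ |ψ₀ x - ψ₀ y| := abs_nonneg _
    have h12 : (0:ℝ) ≤ |c x - c y| := abs_nonneg _
    have h13 : (0:ℝ) ≤ |ψ₀ y| := abs_nonneg _
    have h14 : (0:ℝ) ≤ |c x| := abs_nonneg _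
    nlinarith
  have hψsupp : ∀ x, x ∉ Set.Icc (-(1-κ)) (1-κ) → ψ x = 0 := by
    intro x hx
    have h1 : 1 - κ ≤ |x| := by
      by_contra hc
      push_neg at hc
      exact hx (Set.mem_Icc.mpr (abs_le.mp (le_of_lt hc)))
    rw [hψdef]
    simp only
    rw [hc0 x h1, zero_mul]
  -- norm of b - ψ
  set Eκ := {x : ℝ | 1 - 2*κ < |x|} with hEκ
  have hEκmeas : MeasurableSet Eκ := measurableSet_lt measurable_const measurable_abs
  have hvolEκ : vol Eκ ≤ ENNReal.ofReal (4*κ) := by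
    have hsub : Eκ ∩ Set.Ioo (-1:ℝ) 1 ⊆
        Set.Ioo (-1:ℝ) (-(1-2*κ)) ∪ Set.Ioo (1-2*κ) 1 := by
      rintro y ⟨hy1, hy2⟩
      rw [Set.mem_Ioo] at hy2
      rw [hEκ, Set.mem_setOf_eq] at hy1
      rcases le_total 0 y with hy | hy
      · right
        rw [abs_of_nonneg hy] at hy1
        exact ⟨hy1, hy2.2⟩
      · left
        rw [abs_of_nonpos hy] at hy1
        constructor
        · exact hy2.1
        · linarith
    calc vol Eκ = volume (Eκ ∩ Set.Ioo (-1:ℝ) 1) := by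
          rw [vol, Measure.restrict_apply hEκmeas]
      _ ≤ volume (Set.Ioo (-1:ℝ) (-(1-2*κ)) ∪ Set.Ioo (1-2*κ) 1) := measure_mono hsub
      _ ≤ volume (Set.Ioo (-1:ℝ) (-(1-2*κ))) + volume (Set.Ioo (1-2*κ) 1) :=
          measure_union_le _ _
      _ = ENNReal.ofReal (2*κ) + ENNReal.ofReal (2*κ) := by
          rw [Real.volume_Ioo, Real.volume_Ioo]
          congr 1 <;> [congr 1; congr 1] <;> ring
      _ = ENNReal.ofReal (4*κ) := by
          rw [← ENNReal.ofReal_add (by positivity) (by positivity)]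
          congr 1; ring
  set u₂ : ℝ → ℝ := fun y => b y - ψ y with hu₂
  have hu₂mem : X.Mem u₂ := by
    refine mem_of_bound X u₂ (2*m) (by linarith) (hbm.sub hψcont.measurable.aemeasurable) ?_
    filter_upwards with x
    calc |b x - ψ x| ≤ |b x| + |ψ x| := abs_sub _ _
      _ ≤ m + m := add_le_add (hbbd x) (hψbd x)
      _ = 2*m := by ring
  have hu₂bd : ∀ᵐ x ∂vol, |u₂ x| ≤ 2*m := by
    filter_upwards with x
    calc |b x - ψ x| ≤ |b x| + |ψ x| := abs_sub _ _
      _ ≤ m + m := add_le_add (hbbd x) (hψbd x)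
      _ = 2*m := by ring
  have hu₂int : ∫⁻ x, ENNReal.ofReal |u₂ x| ∂vol ≤ ENNReal.ofReal τ := by
    have hmem_ae : ∀ᵐ x ∂vol, x ∈ Set.Ioo (-1:ℝ) 1 :=
      (ae_restrict_mem measurableSet_Ioo : ∀ᵐ x ∂vol, x ∈ Set.Ioo (-1:ℝ) 1)
    have hptw : ∀ᵐ x ∂vol, ENNReal.ofReal |u₂ x| ≤
        ENNReal.ofReal |bt x - g₂ x| +
        (ENNReal.ofReal τ₃ + Eκ.indicator (fun _ => ENNReal.ofReal m) x) := by
      filter_upwards [hmem_ae] with x hx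
      have hbt : bt x = b x := Set.indicator_of_mem hx _
      have hr : |u₂ x| ≤ |bt x - g₂ x| + (τ₃ + m * Eκ.indicator (fun _ => (1:ℝ)) x) := by
        have ht1 : |u₂ x| ≤ |bt x - g₂ x| + |g₂ x - ψ₀ x| + |ψ₀ x - ψ x| := by
          rw [hu₂]
          simp only
          rw [← hbt]
          calc |bt x - ψ x| = |(bt x - g₂ x) + (g₂ x - ψ₀ x) + (ψ₀ x - ψ x)| := by ring_nf
            _ ≤ |(bt x - g₂ x) + (g₂ x - ψ₀ x)| + |ψ₀ x - ψ x| := abs_add_le _ _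
            _ ≤ |bt x - g₂ x| + |g₂ x - ψ₀ x| + |ψ₀ x - ψ x| := by
                apply add_le_add_left (abs_add_le _ _)
        have ht2 : |g₂ x - ψ₀ x| ≤ τ₃ := by rw [abs_sub_comm]; exact hψ₀err x
        have ht3 : |ψ₀ x - ψ x| ≤ m * Eκ.indicator (fun _ => (1:ℝ)) x := by
          rw [hψdef]
          simp only
          have hid2 : ψ₀ x - c x * ψ₀ x = ψ₀ x * (1 - c x) := by ring
          rw [hid2, abs_mul]
          by_cases hxE : x ∈ Eκ
          · rw [Set.indicator_of_mem hxE, mul_one]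
            calc |ψ₀ x| * |1 - c x| ≤ m * 1 := by
                  apply mul_le_mul (hψ₀bd x) _ (abs_nonneg _) hm0
                  rw [abs_of_nonneg (by linarith [(hcbd x).2])]
                  linarith [(hcbd x).1]
              _ = m := mul_one m
          · rw [Set.indicator_of_notMem hxE, mul_zero]
            have hcx : c x = 1 := by
              apply hc1
              rw [hEκ, Set.mem_setOf_eq, not_lt] at hxE
              exact hxE
            rw [hcx]
            simp
        linarith
      calc ENNReal.ofReal |u₂ x|
          ≤ ENNReal.ofReal (|bt x - g₂ x| + (τ₃ + m * Eκ.indicator (fun _ => (1:ℝ)) x)) :=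
            ENNReal.ofReal_le_ofReal hr
        _ ≤ ENNReal.ofReal |bt x - g₂ x| +
            ENNReal.ofReal (τ₃ + m * Eκ.indicator (fun _ => (1:ℝ)) x) :=
            ENNReal.ofReal_add_le
        _ ≤ ENNReal.ofReal |bt x - g₂ x| +
            (ENNReal.ofReal τ₃ + Eκ.indicator (fun _ => ENNReal.ofReal m) x) := by
            apply add_le_add_right
            refine le_trans ENNReal.ofReal_add_le ?_
            apply add_le_add_right
            by_cases hxE : x ∈ Eκ
            · rw [Set.indicator_of_mem hxE, Set.indicator_of_mem hxE, mul_one]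
            · rw [Set.indicator_of_notMem hxE, Set.indicator_of_notMem hxE, mul_zero]
              simp
    calc ∫⁻ x, ENNReal.ofReal |u₂ x| ∂vol
        ≤ ∫⁻ x, (ENNReal.ofReal |bt x - g₂ x| +
            (ENNReal.ofReal τ₃ + Eκ.indicator (fun _ => ENNReal.ofReal m) x)) ∂vol :=
          lintegral_mono_ae hptw
      _ = (∫⁻ x, ENNReal.ofReal |bt x - g₂ x| ∂vol) +
          ∫⁻ x, (ENNReal.ofReal τ₃ + Eκ.indicator (fun _ => ENNReal.ofReal m) x) ∂vol := by
          apply lintegral_add_left'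
          apply ENNReal.measurable_ofReal.comp_aemeasurable
          exact measurable_abs.comp_aemeasurable
            (hbtmeas.restrict.sub hg₂cont.measurable.aemeasurable)
      _ ≤ ENNReal.ofReal τ₂ + (ENNReal.ofReal (2*τ₃) + ENNReal.ofReal (4*m*κ)) := by
          apply add_le_add
          · -- L¹ bound from eLpNorm
            calc ∫⁻ x, ENNReal.ofReal |bt x - g₂ x| ∂vol
                ≤ ∫⁻ x, ENNReal.ofReal |bt x - g₂ x| ∂volume :=
                  lintegral_mono' Measure.restrict_le_self le_rfl
              _ ≤ ∫⁻ x, ENNReal.ofReal |bt x - g x| ∂volume :=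
                  lintegral_mono fun x => ENNReal.ofReal_le_ofReal (hg₂err x)
              _ = ∫⁻ x, ‖(bt - g) x‖ₑ ∂volume := by
                  apply lintegral_congr
                  intro x
                  rw [Pi.sub_apply, ← Real.enorm_eq_ofReal_abs]
              _ = eLpNorm (bt - g) 1 volume := eLpNorm_one_eq_lintegral_enorm.symm
              _ ≤ ENNReal.ofReal τ₂ := hgnorm
          · rw [lintegral_add_left measurable_const, lintegral_const, vol_univ_eq,
              lintegral_indicator hEκmeas, setLIntegral_const]
            apply add_le_add
            · rw [show (2:ℝ≥0∞) = ENNReal.ofReal 2 from (ENNReal.ofReal_ofNat 2).symm,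
                ← ENNReal.ofReal_mul (by positivity)]
              apply ENNReal.ofReal_le_ofReal
              linarith
            · calc ENNReal.ofReal m * vol Eκ ≤ ENNReal.ofReal m * ENNReal.ofReal (4*κ) :=
                  mul_le_mul_right hvolEκ _
                _ = ENNReal.ofReal (4*m*κ) := by
                    rw [← ENNReal.ofReal_mul hm0]
                    congr 1; ring
      _ ≤ ENNReal.ofReal τ := by
          rw [← ENNReal.ofReal_add (by positivity) (by positivity),
            ← ENNReal.ofReal_add (by positivity) (by positivity)]
          apply ENNReal.ofReal_le_ofReal
          have hk2 : 4*m*κ ≤ τ/4 := by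
            have h1 : κ ≤ τ/(16*(m+1)) := min_le_right _ _
            have h2 : 4*m*κ ≤ 4*m*(τ/(16*(m+1))) := by
              apply mul_le_mul_of_nonneg_left h1 (by linarith)
            have h3 : 4*m*(τ/(16*(m+1))) ≤ τ/4 := by
              rw [show 4*m*(τ/(16*(m+1))) = 4*m*τ/(16*(m+1)) by ring,
                div_le_div_iff₀ (by positivity) (by norm_num)]
              nlinarith
            linarith
          rw [hτ₂, hτ₃]
          linarith
  have hu₂nrm : X.Nrm u₂ ≤ η/2 := hτ u₂ hu₂mem hu₂bd hu₂int
  refine ⟨ψ, Real.toNNReal (L + m * (1/κ)), m, κ, hκ0, hκ14, hm0, hψlip, hψbd, hψsupp,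
    hψmem, ?_⟩
  have hsplit : (fun y => f y - ψ y) = (fun y => f y - b y) + u₂ := by
    funext y
    simp only [hu₂, Pi.add_apply]
    ring
  calc X.Nrm (fun y => f y - ψ y) ≤ X.Nrm (fun y => f y - b y) + X.Nrm u₂ := by
        rw [hsplit]
        exact X.nrm_add_le _ _ hdmem hu₂mem
    _ < η/2 + η/2 := add_lt_add_of_lt_of_le hdnrm hu₂nrm
    _ = η := by ring

end FHTAux
namespace FHTAux

/-! ### Integrability helpers -/

lemma integrableOn_of_bounded {s : Set ℝ} (hs : MeasurableSet s) (hμ : volume s < ⊤)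
    {u : ℝ → ℝ} (hu : AEStronglyMeasurable u (volume.restrict s)) {C : ℝ}
    (hC : ∀ y ∈ s, |u y| ≤ C) : IntegrableOn u s volume := by
  apply Integrable.mono' (integrableOn_const (C := C) hμ.ne) hu
  rw [ae_restrict_iff' hs]
  filter_upwards with y hy
  rw [Real.norm_eq_abs]
  exact hC y hy

lemma integrableOn_mul_inv {s : Set ℝ} (hs : MeasurableSet s) {e : ℝ → ℝ}
    (hint : IntegrableOn e s volume) {x ε : ℝ} (hε : 0 < ε)
    (hfar : ∀ y ∈ s, ε ≤ |y - x|) :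
    IntegrableOn (fun y => e y * (y - x)⁻¹) s volume := by
  apply Integrable.mono' ((hint.abs).const_mul ε⁻¹)
  · exact hint.aestronglyMeasurable.mul
      ((measurable_id.sub measurable_const).inv.aestronglyMeasurable)
  · rw [ae_restrict_iff' hs]
    filter_upwards with y hy
    rw [Real.norm_eq_abs, abs_mul, abs_inv]
    rw [mul_comm (ε⁻¹) _]
    apply mul_le_mul_of_nonneg_left _ (abs_nonneg _)
    exact inv_anti₀ hε (hfar y hy)

/-! ### Interval integral of `(y - x)⁻¹` -/

lemma integral_inv_left {x ε : ℝ} (hε : 0 < ε) (hx : -1 < x - ε) :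
    ∫ y in Set.Ioo (-1:ℝ) (x - ε), (y - x)⁻¹ = Real.log ε - Real.log (1 + x) := by
  have h1 : (-1:ℝ) ≤ x - ε := le_of_lt hx
  have hxpos : 0 < 1 + x := by linarith
  rw [← integral_Ioc_eq_integral_Ioo, ← intervalIntegral.integral_of_le h1]
  have h2 : ∫ y in (-1:ℝ)..(x - ε), (y - x)⁻¹ = ∫ u in (-1 - x)..(x - ε - x), u⁻¹ :=
    intervalIntegral.integral_comp_sub_right (fun u => u⁻¹) x
  rw [h2, show x - ε - x = -ε by ring]
  rw [integral_inv]
  · rw [show (-ε) / (-1 - x) = ε / (1 + x) by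
      rw [show (-1 - x : ℝ) = -(1 + x) by ring, neg_div_neg_eq]]
    exact Real.log_div (ne_of_gt hε) (ne_of_gt hxpos)
  · intro hc
    rw [Set.mem_uIcc] at hc
    rcases hc with ⟨h3, _⟩ | ⟨_, h4⟩
    · linarith
    · linarith

lemma integral_inv_right {x ε : ℝ} (hε : 0 < ε) (hx : x + ε < 1) :
    ∫ y in Set.Ioo (x + ε) (1:ℝ), (y - x)⁻¹ = Real.log (1 - x) - Real.log ε := by
  have h1 : x + ε ≤ 1 := le_of_lt hx
  have hxpos : 0 < 1 - x := by linarith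
  rw [← integral_Ioc_eq_integral_Ioo, ← intervalIntegral.integral_of_le h1]
  have h2 : ∫ y in (x + ε)..(1:ℝ), (y - x)⁻¹ = ∫ u in (x + ε - x)..(1 - x), u⁻¹ :=
    intervalIntegral.integral_comp_sub_right (fun u => u⁻¹) x
  rw [h2, show x + ε - x = ε by ring]
  rw [integral_inv]
  · exact Real.log_div (ne_of_gt hxpos) (ne_of_gt hε)
  · intro hc
    rw [Set.mem_uIcc] at hc
    rcases hc with ⟨h3, _⟩ | ⟨_, h4⟩
    · linarith
    · linarith

end FHTAux
namespace FHTAux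

lemma limUnder_junk {F G : ℝ → ℝ} (hF : ¬ ∃ l, Tendsto F (𝓝[>] (0:ℝ)) (𝓝 l))
    (hG : ¬ ∃ l, Tendsto G (𝓝[>] (0:ℝ)) (𝓝 l)) :
    limUnder (𝓝[>] (0:ℝ)) F = limUnder (𝓝[>] (0:ℝ)) G := by
  unfold limUnder lim
  congr 1
  funext a
  simp only [eq_iff_iff]
  exact ⟨fun h => absurd ⟨a, h⟩ hF, fun h => absurd ⟨a, h⟩ hG⟩

lemma fht_comparison (ψ : ℝ → ℝ) (K : ℝ≥0) (hK : LipschitzWith K ψ) (m κ : ℝ)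
    (hm0 : 0 ≤ m) (hm : ∀ x, |ψ x| ≤ m) (hκ0 : 0 < κ) (hκ : κ ≤ 1/4)
    (hsupp : ∀ x, x ∉ Set.Icc (-(1-κ)) (1-κ) → ψ x = 0)
    (e : ℝ → ℝ) (he : Integrable e vol) :
    ∃ M : ℝ, 0 ≤ M ∧ ∀ x ∈ Set.Ioo (-1:ℝ) 1,
      |FHT (fun y => e y + ψ y) x| ≤ |FHT e x| + M := by
  have hπ : 0 < Real.pi := Real.pi_pos
  set Λ := |Real.log κ| + |Real.log 2| with hΛ
  have hΛ0 : 0 ≤ Λ := by positivity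
  set M := (1/Real.pi) * (2*(K:ℝ) + m * (2*Λ)) with hM
  have hM0 : 0 ≤ M := by positivity
  refine ⟨M, hM0, ?_⟩
  intro x hx
  rw [Set.mem_Ioo] at hx
  set ε₀ := min (1 + x) (1 - x) with hε₀def
  have hε₀ : 0 < ε₀ := lt_min (by linarith [hx.1]) (by linarith [hx.2])
  -- the difference quotient
  set Q : ℝ → ℝ := fun y => (ψ y - ψ x) * (y - x)⁻¹ with hQdef
  have hQbd : ∀ y, |Q y| ≤ (K:ℝ) := by
    intro y
    by_cases hyx : y = x
    · subst hyx
      simp only [hQdef, sub_self, zero_mul, abs_zero]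
      exact K.coe_nonneg
    · have hlip := hK.dist_le_mul y x
      rw [Real.dist_eq, Real.dist_eq] at hlip
      have hne : |y - x| ≠ 0 := abs_ne_zero.mpr (sub_ne_zero.mpr hyx)
      calc |Q y| = |ψ y - ψ x| * |y - x|⁻¹ := by rw [hQdef]; rw [abs_mul, abs_inv]
        _ ≤ ((K:ℝ) * |y - x|) * |y - x|⁻¹ :=
            mul_le_mul_of_nonneg_right hlip (inv_nonneg.mpr (abs_nonneg _))
        _ = (K:ℝ) := by
            rw [mul_assoc, mul_inv_cancel₀ hne, mul_one]
  have hQmeas : Measurable Q :=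
    (hK.continuous.measurable.sub measurable_const).mul
      ((measurable_id.sub measurable_const).inv)
  have hQint : IntegrableOn Q (Set.Ioo (-1:ℝ) 1) volume := by
    apply integrableOn_of_bounded measurableSet_Ioo
    · rw [Real.volume_Ioo]; exact ENNReal.ofReal_lt_top
    · exact hQmeas.aestronglyMeasurable
    · exact fun y _ => hQbd y
  -- limits of the ψ part
  set Lψ := (∫ y in Set.Ioo (-1:ℝ) 1, Q y) + ψ x * (Real.log (1-x) - Real.log (1+x))
    with hLψdef
  -- pieces for each ε
  have hregion : ∀ ε : ℝ, ε ∈ Set.Ioo 0 ε₀ → -1 < x - ε ∧ x + ε < 1 := by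
    intro ε hε
    rw [Set.mem_Ioo] at hε
    constructor
    · have := lt_of_lt_of_le hε.2 (min_le_left _ _)
      linarith
    · have := lt_of_lt_of_le hε.2 (min_le_right _ _)
      linarith
  have hfar1 : ∀ ε : ℝ, 0 < ε → ∀ y ∈ Set.Ioo (-1:ℝ) (x - ε), ε ≤ |y - x| := by
    intro ε hε y hy
    rw [Set.mem_Ioo] at hy
    rw [abs_of_nonpos (by linarith)]
    linarith [hy.2]
  have hfar2 : ∀ ε : ℝ, 0 < ε → ∀ y ∈ Set.Ioo (x + ε) (1:ℝ), ε ≤ |y - x| := by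
    intro ε hε y hy
    rw [Set.mem_Ioo] at hy
    rw [abs_of_nonneg (by linarith [hy.1])]
    linarith [hy.1]
  have hsub1 : ∀ ε : ℝ, 0 < ε → Set.Ioo (-1:ℝ) (x - ε) ⊆ Set.Ioo (-1:ℝ) 1 :=
    fun ε hε => Set.Ioo_subset_Ioo le_rfl (by linarith [hx.2])
  have hsub2 : ∀ ε : ℝ, 0 < ε → Set.Ioo (x + ε) (1:ℝ) ⊆ Set.Ioo (-1:ℝ) 1 :=
    fun ε hε => Set.Ioo_subset_Ioo (by linarith [hx.1]) le_rfl
  -- integrability of all pieces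
  have hQint1 : ∀ ε : ℝ, 0 < ε → IntegrableOn Q (Set.Ioo (-1:ℝ) (x - ε)) volume :=
    fun ε hε => hQint.mono_set (hsub1 ε hε)
  have hQint2 : ∀ ε : ℝ, 0 < ε → IntegrableOn Q (Set.Ioo (x + ε) (1:ℝ)) volume :=
    fun ε hε => hQint.mono_set (hsub2 ε hε)
  have hinvmeas : Measurable (fun y : ℝ => (y - x)⁻¹) :=
    (measurable_id.sub measurable_const).inv
  have hinvint1 : ∀ ε : ℝ, 0 < ε →
      IntegrableOn (fun y => (y - x)⁻¹) (Set.Ioo (-1:ℝ) (x - ε)) volume := by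
    intro ε hε
    apply integrableOn_of_bounded measurableSet_Ioo
    · rw [Real.volume_Ioo]; exact ENNReal.ofReal_lt_top
    · exact hinvmeas.aestronglyMeasurable
    · intro y hy
      rw [abs_inv]
      exact inv_anti₀ hε (hfar1 ε hε y hy)
  have hinvint2 : ∀ ε : ℝ, 0 < ε →
      IntegrableOn (fun y => (y - x)⁻¹) (Set.Ioo (x + ε) (1:ℝ)) volume := by
    intro ε hε
    apply integrableOn_of_bounded measurableSet_Ioo
    · rw [Real.volume_Ioo]; exact ENNReal.ofReal_lt_top
    · exact hinvmeas.aestronglyMeasurable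
    · intro y hy
      rw [abs_inv]
      exact inv_anti₀ hε (hfar2 ε hε y hy)
  have heint : Integrable e vol := he
  have heintOn : IntegrableOn e (Set.Ioo (-1:ℝ) 1) volume := heint
  have heint1 : ∀ ε : ℝ, 0 < ε →
      IntegrableOn (fun y => e y * (y - x)⁻¹) (Set.Ioo (-1:ℝ) (x - ε)) volume :=
    fun ε hε => integrableOn_mul_inv measurableSet_Ioo
      (heintOn.mono_set (hsub1 ε hε)) hε (hfar1 ε hε)
  have heint2 : ∀ ε : ℝ, 0 < ε →
      IntegrableOn (fun y => e y * (y - x)⁻¹) (Set.Ioo (x + ε) (1:ℝ)) volume :=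
    fun ε hε => integrableOn_mul_inv measurableSet_Ioo
      (heintOn.mono_set (hsub2 ε hε)) hε (hfar2 ε hε)
  have hψmeas : Measurable ψ := hK.continuous.measurable
  have hψint1 : ∀ ε : ℝ, 0 < ε →
      IntegrableOn (fun y => ψ y * (y - x)⁻¹) (Set.Ioo (-1:ℝ) (x - ε)) volume := by
    intro ε hε
    apply integrableOn_of_bounded measurableSet_Ioo
    · rw [Real.volume_Ioo]; exact ENNReal.ofReal_lt_top
    · exact (hψmeas.mul hinvmeas).aestronglyMeasurable
    · intro y hy
      rw [abs_mul, abs_inv]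
      calc |ψ y| * |y - x|⁻¹ ≤ m * ε⁻¹ := by
            apply mul_le_mul (hm y) (inv_anti₀ hε (hfar1 ε hε y hy))
              (inv_nonneg.mpr (abs_nonneg _)) hm0
        _ ≤ m * ε⁻¹ := le_rfl
  have hψint2 : ∀ ε : ℝ, 0 < ε →
      IntegrableOn (fun y => ψ y * (y - x)⁻¹) (Set.Ioo (x + ε) (1:ℝ)) volume := by
    intro ε hε
    apply integrableOn_of_bounded measurableSet_Ioo
    · rw [Real.volume_Ioo]; exact ENNReal.ofReal_lt_top
    · exact (hψmeas.mul hinvmeas).aestronglyMeasurable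
    · intro y hy
      rw [abs_mul, abs_inv]
      apply mul_le_mul (hm y) (inv_anti₀ hε (hfar2 ε hε y hy))
        (inv_nonneg.mpr (abs_nonneg _)) hm0
  -- the ψ-part sum
  set Sψ : ℝ → ℝ := fun ε => (∫ y in Set.Ioo (-1:ℝ) (x - ε), Q y) +
      (∫ y in Set.Ioo (x + ε) (1:ℝ), Q y) +
      ψ x * (Real.log (1-x) - Real.log (1+x)) with hSψdef
  have hψsum : ∀ ε : ℝ, ε ∈ Set.Ioo 0 ε₀ →
      (∫ y in Set.Ioo (-1:ℝ) (x - ε), ψ y / (y - x)) +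
      (∫ y in Set.Ioo (x + ε) (1:ℝ), ψ y / (y - x)) = Sψ ε := by
    intro ε hε
    have hεpos : 0 < ε := (Set.mem_Ioo.mp hε).1
    obtain ⟨hr1, hr2⟩ := hregion ε hε
    have hA : ∫ y in Set.Ioo (-1:ℝ) (x - ε), ψ y / (y - x) =
        (∫ y in Set.Ioo (-1:ℝ) (x - ε), Q y) + ψ x * (Real.log ε - Real.log (1 + x)) := by
      have hptw : ∀ y : ℝ, ψ y / (y - x) = Q y + ψ x * (y - x)⁻¹ := by
        intro y
        rw [hQdef, div_eq_mul_inv]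
        ring
      rw [show (fun y => ψ y / (y - x)) = fun y => ψ y / (y - x) from rfl]
      calc ∫ y in Set.Ioo (-1:ℝ) (x - ε), ψ y / (y - x)
          = ∫ y in Set.Ioo (-1:ℝ) (x - ε), (Q y + ψ x * (y - x)⁻¹) := by
            apply setIntegral_congr_fun measurableSet_Ioo
            intro y _
            exact hptw y
        _ = (∫ y in Set.Ioo (-1:ℝ) (x - ε), Q y) +
            ∫ y in Set.Ioo (-1:ℝ) (x - ε), ψ x * (y - x)⁻¹ :=
            integral_add (hQint1 ε hεpos) ((hinvint1 ε hεpos).const_mul (ψ x))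
        _ = (∫ y in Set.Ioo (-1:ℝ) (x - ε), Q y) + ψ x * (Real.log ε - Real.log (1 + x)) := by
            rw [MeasureTheory.integral_const_mul, integral_inv_left hεpos hr1]
    have hB : ∫ y in Set.Ioo (x + ε) (1:ℝ), ψ y / (y - x) =
        (∫ y in Set.Ioo (x + ε) (1:ℝ), Q y) + ψ x * (Real.log (1 - x) - Real.log ε) := by
      calc ∫ y in Set.Ioo (x + ε) (1:ℝ), ψ y / (y - x)
          = ∫ y in Set.Ioo (x + ε) (1:ℝ), (Q y + ψ x * (y - x)⁻¹) := by
            apply setIntegral_congr_fun measurableSet_Ioo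
            intro y _
            beta_reduce
            rw [hQdef, div_eq_mul_inv]
            ring
        _ = (∫ y in Set.Ioo (x + ε) (1:ℝ), Q y) +
            ∫ y in Set.Ioo (x + ε) (1:ℝ), ψ x * (y - x)⁻¹ :=
            integral_add (hQint2 ε hεpos) ((hinvint2 ε hεpos).const_mul (ψ x))
        _ = (∫ y in Set.Ioo (x + ε) (1:ℝ), Q y) + ψ x * (Real.log (1 - x) - Real.log ε) := by
            rw [MeasureTheory.integral_const_mul, integral_inv_right hεpos hr2]
    rw [hA, hB, hSψdef]
    ring
  -- gap estimate
  have hgap : ∀ ε : ℝ, ε ∈ Set.Ioo 0 ε₀ → |Sψ ε - Lψ| ≤ 2*(K:ℝ)*ε := by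
    intro ε hε
    have hεpos : 0 < ε := (Set.mem_Ioo.mp hε).1
    set U := Set.Ioo (-1:ℝ) (x - ε) ∪ Set.Ioo (x + ε) (1:ℝ) with hU
    have hdisj : Disjoint (Set.Ioo (-1:ℝ) (x - ε)) (Set.Ioo (x + ε) (1:ℝ)) := by
      rw [Set.disjoint_left]
      intro y hy1 hy2
      rw [Set.mem_Ioo] at hy1 hy2
      linarith [hy1.2, hy2.1]
    have hUsub : U ⊆ Set.Ioo (-1:ℝ) 1 :=
      Set.union_subset (hsub1 ε hεpos) (hsub2 ε hεpos)
    have hUmeas : MeasurableSet U := measurableSet_Ioo.union measurableSet_Ioo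
    have hIU : ∫ y in U, Q y =
        (∫ y in Set.Ioo (-1:ℝ) (x - ε), Q y) + ∫ y in Set.Ioo (x + ε) (1:ℝ), Q y :=
      setIntegral_union hdisj measurableSet_Ioo (hQint1 ε hεpos) (hQint2 ε hεpos)
    have hdiff : ∫ y in Set.Ioo (-1:ℝ) 1 \ U, Q y =
        (∫ y in Set.Ioo (-1:ℝ) 1, Q y) - ∫ y in U, Q y :=
      integral_diff hUmeas hQint hUsub
    have hdiffsub : Set.Ioo (-1:ℝ) 1 \ U ⊆ Set.Icc (x - ε) (x + ε) := by
      rintro y ⟨hy1, hy2⟩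
      rw [hU, Set.mem_union] at hy2
      push_neg at hy2
      rw [Set.mem_Ioo] at hy1
      obtain ⟨h1, h2⟩ := hy2
      rw [Set.mem_Ioo] at h1 h2
      push_neg at h1 h2
      constructor
      · exact h1 hy1.1
      · by_contra hcon
        push_neg at hcon
        exact absurd (h2 hcon) (not_le.mpr hy1.2)
    have hvoldiff : volume (Set.Ioo (-1:ℝ) 1 \ U) ≤ ENNReal.ofReal (2*ε) := by
      calc volume (Set.Ioo (-1:ℝ) 1 \ U) ≤ volume (Set.Icc (x - ε) (x + ε)) :=
          measure_mono hdiffsub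
        _ = ENNReal.ofReal (2*ε) := by rw [Real.volume_Icc]; congr 1; ring
    have hbound : |∫ y in Set.Ioo (-1:ℝ) 1 \ U, Q y| ≤ (K:ℝ) * (2*ε) := by
      have h1 : volume (Set.Ioo (-1:ℝ) 1 \ U) < ⊤ :=
        lt_of_le_of_lt hvoldiff ENNReal.ofReal_lt_top
      have h2 := norm_setIntegral_le_of_norm_le_const (μ := volume)
        (s := Set.Ioo (-1:ℝ) 1 \ U) (C := (K:ℝ)) h1
        (fun y _ => by rw [Real.norm_eq_abs]; exact hQbd y)
      rw [Real.norm_eq_abs] at h2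
      calc |∫ y in Set.Ioo (-1:ℝ) 1 \ U, Q y|
          ≤ (K:ℝ) * (volume (Set.Ioo (-1:ℝ) 1 \ U)).toReal := h2
        _ ≤ (K:ℝ) * (2*ε) := by
            apply mul_le_mul_of_nonneg_left _ K.coe_nonneg
            calc (volume (Set.Ioo (-1:ℝ) 1 \ U)).toReal
                ≤ (ENNReal.ofReal (2*ε)).toReal :=
                  ENNReal.toReal_mono ENNReal.ofReal_ne_top hvoldiff
              _ = 2*ε := ENNReal.toReal_ofReal (by linarith)
    have hSL : Sψ ε - Lψ = -(∫ y in Set.Ioo (-1:ℝ) 1 \ U, Q y) := by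
      rw [hSψdef, hLψdef, hdiff, hIU]
      ring
    rw [hSL, abs_neg]
    calc |∫ y in Set.Ioo (-1:ℝ) 1 \ U, Q y| ≤ (K:ℝ) * (2*ε) := hbound
      _ = 2*(K:ℝ)*ε := by ring
  -- |Lψ| bound
  have hLψbd : |Lψ| ≤ 2*(K:ℝ) + m * (2*Λ) := by
    have h1 : |∫ y in Set.Ioo (-1:ℝ) 1, Q y| ≤ (K:ℝ) * 2 := by
      have hfin : volume (Set.Ioo (-1:ℝ) 1) < ⊤ := by
        rw [Real.volume_Ioo]; exact ENNReal.ofReal_lt_top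
      have h2 := norm_setIntegral_le_of_norm_le_const (μ := volume)
        (s := Set.Ioo (-1:ℝ) 1) (C := (K:ℝ)) hfin
        (fun y _ => by rw [Real.norm_eq_abs]; exact hQbd y)
      rw [Real.norm_eq_abs] at h2
      calc |∫ y in Set.Ioo (-1:ℝ) 1, Q y| ≤ (K:ℝ) * (volume (Set.Ioo (-1:ℝ) 1)).toReal := h2
        _ = (K:ℝ) * 2 := by
            rw [Real.volume_Ioo, show (1:ℝ) - -1 = 2 by norm_num,
              ENNReal.toReal_ofReal (by norm_num)]
    have h2 : |ψ x * (Real.log (1-x) - Real.log (1+x))| ≤ m * (2*Λ) := by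
      by_cases hxin : x ∈ Set.Icc (-(1-κ)) (1-κ)
      · rw [Set.mem_Icc] at hxin
        have hb1 : κ ≤ 1 - x := by linarith [hxin.2]
        have hb2 : 1 - x ≤ 2 := by linarith [hx.1]
        have hb3 : κ ≤ 1 + x := by linarith [hxin.1]
        have hb4 : 1 + x ≤ 2 := by linarith [hx.2]
        have hlog : ∀ u : ℝ, κ ≤ u → u ≤ 2 → |Real.log u| ≤ Λ := by
          intro u hu1 hu2
          have hupos : 0 < u := lt_of_lt_of_le hκ0 hu1
          have hl1 : Real.log κ ≤ Real.log u := Real.log_le_log hκ0 hu1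
          have hl2 : Real.log u ≤ Real.log 2 := Real.log_le_log hupos hu2
          rw [abs_le, hΛ]
          constructor
          · calc -(|Real.log κ| + |Real.log 2|) ≤ -|Real.log κ| := by
                  linarith [abs_nonneg (Real.log 2)]
              _ ≤ Real.log κ := neg_abs_le _
              _ ≤ Real.log u := hl1
          · calc Real.log u ≤ Real.log 2 := hl2
              _ ≤ |Real.log 2| := le_abs_self _
              _ ≤ |Real.log κ| + |Real.log 2| := by linarith [abs_nonneg (Real.log κ)]
        calc |ψ x * (Real.log (1-x) - Real.log (1+x))|
            = |ψ x| * |Real.log (1-x) - Real.log (1+x)| := abs_mul _ _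
          _ ≤ m * (2*Λ) := by
              apply mul_le_mul (hm x) _ (abs_nonneg _) hm0
              calc |Real.log (1-x) - Real.log (1+x)|
                  ≤ |Real.log (1-x)| + |Real.log (1+x)| := abs_sub _ _
                _ ≤ Λ + Λ := add_le_add (hlog _ hb1 hb2) (hlog _ hb3 hb4)
                _ = 2*Λ := by ring
      · rw [hsupp x hxin, zero_mul, abs_zero]
        positivity
    calc |Lψ| ≤ |∫ y in Set.Ioo (-1:ℝ) 1, Q y| +
        |ψ x * (Real.log (1-x) - Real.log (1+x))| := abs_add_le _ _
      _ ≤ (K:ℝ) * 2 + m * (2*Λ) := add_le_add h1 h2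
      _ = 2*(K:ℝ) + m * (2*Λ) := by ring
  -- tendsto of Sψ
  have hmemIoo : Set.Ioo (0:ℝ) ε₀ ∈ 𝓝[>] (0:ℝ) :=
    Ioo_mem_nhdsGT_of_mem ⟨le_refl 0, hε₀⟩
  have hψtend : Tendsto Sψ (𝓝[>] (0:ℝ)) (𝓝 Lψ) := by
    rw [← tendsto_sub_nhds_zero_iff]
    apply squeeze_zero_norm' (a := fun ε => 2*(K:ℝ)*ε)
    · filter_upwards [hmemIoo] with ε hε
      rw [Real.norm_eq_abs]
      exact hgap ε hε
    · have h1 : Tendsto (fun ε : ℝ => 2*(K:ℝ)*ε) (𝓝 0) (𝓝 (2*(K:ℝ)*0)) :=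
        (continuous_const.mul continuous_id).tendsto 0
      rw [mul_zero] at h1
      exact h1.mono_left nhdsWithin_le_nhds
  -- decomposition of the full expression
  set Fe : ℝ → ℝ := fun ε => (1 / Real.pi) *
    ((∫ y in Set.Ioo (-1 : ℝ) (x - ε), e y / (y - x)) +
      ∫ y in Set.Ioo (x + ε) (1 : ℝ), e y / (y - x)) with hFedef
  set Ff : ℝ → ℝ := fun ε => (1 / Real.pi) *
    ((∫ y in Set.Ioo (-1 : ℝ) (x - ε), (fun y => e y + ψ y) y / (y - x)) +
      ∫ y in Set.Ioo (x + ε) (1 : ℝ), (fun y => e y + ψ y) y / (y - x)) with hFfdef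
  have hFHTe : FHT e x = limUnder (𝓝[>] (0:ℝ)) Fe := rfl
  have hFHTf : FHT (fun y => e y + ψ y) x = limUnder (𝓝[>] (0:ℝ)) Ff := rfl
  have heqFf : ∀ ε : ℝ, ε ∈ Set.Ioo 0 ε₀ → Ff ε = Fe ε + (1/Real.pi) * Sψ ε := by
    intro ε hε
    have hεpos : 0 < ε := (Set.mem_Ioo.mp hε).1
    have hsplit1 : ∫ y in Set.Ioo (-1:ℝ) (x - ε), (e y + ψ y) / (y - x) =
        (∫ y in Set.Ioo (-1:ℝ) (x - ε), e y / (y - x)) +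
        ∫ y in Set.Ioo (-1:ℝ) (x - ε), ψ y / (y - x) := by
      calc ∫ y in Set.Ioo (-1:ℝ) (x - ε), (e y + ψ y) / (y - x)
          = ∫ y in Set.Ioo (-1:ℝ) (x - ε), (e y * (y-x)⁻¹ + ψ y * (y-x)⁻¹) := by
            apply setIntegral_congr_fun measurableSet_Ioo
            intro y _
            beta_reduce
            rw [div_eq_mul_inv]
            ring
        _ = (∫ y in Set.Ioo (-1:ℝ) (x - ε), e y * (y-x)⁻¹) +
            ∫ y in Set.Ioo (-1:ℝ) (x - ε), ψ y * (y-x)⁻¹ :=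
            integral_add (heint1 ε hεpos) (hψint1 ε hεpos)
        _ = _ := by
            congr 1
            all_goals
              apply setIntegral_congr_fun measurableSet_Ioo
              intro y _
              beta_reduce
              rw [div_eq_mul_inv]
    have hsplit2 : ∫ y in Set.Ioo (x + ε) (1:ℝ), (e y + ψ y) / (y - x) =
        (∫ y in Set.Ioo (x + ε) (1:ℝ), e y / (y - x)) +
        ∫ y in Set.Ioo (x + ε) (1:ℝ), ψ y / (y - x) := by
      calc ∫ y in Set.Ioo (x + ε) (1:ℝ), (e y + ψ y) / (y - x)
          = ∫ y in Set.Ioo (x + ε) (1:ℝ), (e y * (y-x)⁻¹ + ψ y * (y-x)⁻¹) := by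
            apply setIntegral_congr_fun measurableSet_Ioo
            intro y _
            beta_reduce
            rw [div_eq_mul_inv]
            ring
        _ = (∫ y in Set.Ioo (x + ε) (1:ℝ), e y * (y-x)⁻¹) +
            ∫ y in Set.Ioo (x + ε) (1:ℝ), ψ y * (y-x)⁻¹ :=
            integral_add (heint2 ε hεpos) (hψint2 ε hεpos)
        _ = _ := by
            congr 1
            all_goals
              apply setIntegral_congr_fun measurableSet_Ioo
              intro y _
              beta_reduce
              rw [div_eq_mul_inv]
    rw [hFfdef, hFedef]
    simp only
    rw [hsplit1, hsplit2, ← hψsum ε hε]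
    ring
  have hψtend' : Tendsto (fun ε => (1/Real.pi) * Sψ ε) (𝓝[>] (0:ℝ))
      (𝓝 ((1/Real.pi) * Lψ)) := tendsto_const_nhds.mul hψtend
  have heqev : (fun ε => Fe ε + (1/Real.pi) * Sψ ε) =ᶠ[𝓝[>] (0:ℝ)] Ff := by
    filter_upwards [hmemIoo] with ε hε
    exact (heqFf ε hε).symm
  by_cases hconv : ∃ l, Tendsto Fe (𝓝[>] (0:ℝ)) (𝓝 l)
  · obtain ⟨l, hl⟩ := hconv
    have hFf : Tendsto Ff (𝓝[>] (0:ℝ)) (𝓝 (l + (1/Real.pi) * Lψ)) :=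
      Tendsto.congr' heqev (hl.add hψtend')
    rw [hFHTe, hFHTf, hl.limUnder_eq, hFf.limUnder_eq]
    calc |l + (1/Real.pi) * Lψ| ≤ |l| + |(1/Real.pi) * Lψ| := abs_add_le _ _
      _ ≤ |l| + M := by
          apply add_le_add_right
          rw [abs_mul, abs_of_pos (by positivity : (0:ℝ) < 1/Real.pi), hM]
          exact mul_le_mul_of_nonneg_left hLψbd (by positivity)
  · have hnconv : ¬ ∃ l, Tendsto Ff (𝓝[>] (0:ℝ)) (𝓝 l) := by
      rintro ⟨l', hl'⟩
      apply hconv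
      refine ⟨l' - (1/Real.pi) * Lψ, ?_⟩
      have : Tendsto (fun ε => Ff ε - (1/Real.pi) * Sψ ε) (𝓝[>] (0:ℝ))
          (𝓝 (l' - (1/Real.pi) * Lψ)) := hl'.sub hψtend'
      apply Tendsto.congr' _ this
      filter_upwards [hmemIoo] with ε hε
      rw [heqFf ε hε]
      ring
    rw [hFHTe, hFHTf, limUnder_junk hnconv hconv]
    linarith [abs_nonneg (limUnder (𝓝[>] (0:ℝ)) Fe)]

end FHTAux

open FHTAux
/-- For a rearrangement invariant space `X` over `(-1,1)` with nontrivial Boyd indices and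
`T_X : X → X` the bounded finite Hilbert transform: every simple function belongs to the
order continuous part `X_a`, and `T_X(X_a) ⊆ X_a`. -/
theorem simple_mem_OCPart_and_FHT_maps_OCPart (X : BFS) (hri : RearrInvariant X)
    (hB : NontrivialBoyd X) (hT : THilbBounded X) :
    (∀ s : MeasureTheory.SimpleFunc ℝ ℝ, OCPart X.Mem X.Nrm s) ∧
    (∀ f, OCPart X.Mem X.Nrm f → OCPart X.Mem X.Nrm (FHT f)) := by
  have hsm : SmallSets X := smallSets X hri hB
  constructor
  · -- simple functions belong to `X_a`
    intro s
    refine ⟨X.simple_mem s, ?_⟩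
    intro g hgmem hgcond hgten
    obtain ⟨M₀, hM₀⟩ := (s.map (fun r => |r|)).exists_forall_le
    have hM₀' : ∀ x, |s x| ≤ M₀ := by
      intro x
      have := hM₀ x
      rwa [MeasureTheory.SimpleFunc.map_apply] at this
    set M := max M₀ 0 with hM
    apply nrm_tendsto_zero X hsm g M (le_max_right _ _) hgmem ?_ hgten
    intro n
    filter_upwards [hgcond n] with x hx
    rw [abs_of_nonneg hx.1]
    calc g n x ≤ |s x| := hx.2.2
      _ ≤ M₀ := hM₀' x
      _ ≤ M := le_max_left _ _
  · -- `T_X` maps `X_a` into `X_a`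
    intro f hf
    refine ⟨hT.1 f hf.1, ?_⟩
    intro g hgmem hgcond hgten
    rw [NormedAddCommGroup.tendsto_nhds_zero]
    intro ε hε
    obtain ⟨C, hC⟩ := hT.2
    set C' := max C 1 with hC'def
    have hC'1 : (1:ℝ) ≤ C' := le_max_right _ _
    have hC'pos : (0:ℝ) < C' := by linarith
    set η := ε / (2 * C') with hηdef
    have hηpos : 0 < η := by positivity
    obtain ⟨ψ, K, m, κ, hκ0, hκ14, hm0, hψlip, hψbd, hψsupp, hψmem, hψnrm⟩ :=
      approx X hsm f hf hηpos
    set e : ℝ → ℝ := fun y => f y - ψ y with hedef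
    have hemem : X.Mem e := by
      have h1 : e = f + (-1:ℝ) • ψ := by
        funext y
        simp only [hedef, Pi.add_apply, Pi.smul_apply, smul_eq_mul]
        ring
      rw [h1]
      exact X.add_mem _ _ hf.1 (X.smul_mem (-1) ψ hψmem)
    have heint : Integrable e vol := integrable_of_mem X hri hB e hemem
    obtain ⟨M, hM0, hcomp⟩ :=
      fht_comparison ψ K hψlip m κ hm0 hψbd hκ0 hκ14 hψsupp e heint
    have hfe : (fun y => e y + ψ y) = f := by
      funext y
      simp only [hedef]
      ring
    rw [hfe] at hcomp
    have hcompae : ∀ᵐ x ∂vol, |FHT f x| ≤ |FHT e x| + M := by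
      filter_upwards [(ae_restrict_mem measurableSet_Ioo :
        ∀ᵐ x ∂vol, x ∈ Set.Ioo (-1:ℝ) 1)] with x hx
      exact hcomp x hx
    have hTe_mem : X.Mem (FHT e) := hT.1 e hemem
    have hTe_nrm : X.Nrm (FHT e) ≤ ε / 2 := by
      have henrm : 0 ≤ X.Nrm e := X.nrm_nonneg e hemem
      calc X.Nrm (FHT e) ≤ C * X.Nrm e := hC e hemem
        _ ≤ C' * X.Nrm e := mul_le_mul_of_nonneg_right (le_max_left _ _) henrm
        _ ≤ C' * η := mul_le_mul_of_nonneg_left (le_of_lt hψnrm) (le_of_lt hC'pos)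
        _ = ε / 2 := by
            rw [hηdef]
            field_simp
    set u : ℕ → ℝ → ℝ := fun n x => min (g n x) M with hudef
    set v : ℕ → ℝ → ℝ := fun n x => max (g n x - M) 0 with hvdef
    have hgid : ∀ n, g n = u n + v n := by
      intro n
      funext x
      simp only [hudef, hvdef, Pi.add_apply]
      rcases le_total (g n x) M with h | h
      · rw [min_eq_left h, max_eq_right (by linarith)]
        ring
      · rw [min_eq_right h, max_eq_left (by linarith)]
        ring
    have humem : ∀ n, X.Mem (u n) := by
      intro n
      refine X.ideal_mem (g n) (u n) (hgmem n)
        ((X.mem_aemeasurable _ (hgmem n)).min aemeasurable_const) ?_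
      filter_upwards [hgcond n] with x hx
      rw [abs_of_nonneg (le_min hx.1 hM0), abs_of_nonneg hx.1]
      exact min_le_left _ _
    have hvmem : ∀ n, X.Mem (v n) := by
      intro n
      refine X.ideal_mem (g n) (v n) (hgmem n)
        (((X.mem_aemeasurable _ (hgmem n)).sub aemeasurable_const).max aemeasurable_const) ?_
      filter_upwards [hgcond n] with x hx
      rw [abs_of_nonneg (le_max_right _ _), abs_of_nonneg hx.1]
      exact max_le (by linarith [hx.1]) hx.1
    have hu_tend : Tendsto (fun n => X.Nrm (u n)) atTop (𝓝 0) := by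
      apply nrm_tendsto_zero X hsm u M hM0 humem
      · intro n
        filter_upwards [hgcond n] with x hx
        rw [abs_of_nonneg (le_min hx.1 hM0)]
        exact min_le_right _ _
      · filter_upwards [hgten] with x hx
        have h1 : Tendsto (fun n => min (g n x) M) atTop (𝓝 (min 0 M)) :=
          hx.min tendsto_const_nhds
        rwa [min_eq_left hM0] at h1
    have hv_nrm : ∀ n, ∀ᵐ x ∂vol, |v n x| ≤ |FHT e x| := by
      intro n
      filter_upwards [hgcond n, hcompae] with x hx1 hx2
      rw [abs_of_nonneg (le_max_right _ _)]
      apply max_le _ (abs_nonneg _)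
      have : g n x ≤ |FHT e x| + M := le_trans hx1.2.2 hx2
      linarith
    have hv_le : ∀ n, X.Nrm (v n) ≤ ε / 2 := by
      intro n
      calc X.Nrm (v n) ≤ X.Nrm (FHT e) :=
          X.nrm_mono (v n) (FHT e) (hvmem n) hTe_mem (hv_nrm n)
        _ ≤ ε / 2 := hTe_nrm
    filter_upwards [hu_tend.eventually_lt_const (half_pos hε)] with n hn
    have hnn : 0 ≤ X.Nrm (g n) := X.nrm_nonneg _ (hgmem n)
    rw [Real.norm_eq_abs, abs_of_nonneg hnn]
    calc X.Nrm (g n) ≤ X.Nrm (u n) + X.Nrm (v n) := by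
          rw [hgid n]
          exact X.nrm_add_le _ _ (humem n) (hvmem n)
      _ < ε / 2 + ε / 2 := add_lt_add_of_lt_of_le hn (hv_le n)
      _ = ε := by ring
end
end

section
/- Let X be a rearrangement invariant space over (-1,1) with nontrivial Boyd indices and m_X : ℬ → X the vector measure A ↦ T(χ_A). A Borel set A ⊆ (-1,1) is m_X-null (i.e., m_X(B) = 0 for all Borel B ⊆ A) if and only if A is Lebesgue-null. -/
open MeasureTheory Set Filter Topology ENNReal NNReal

noncomputable section

private lemma indicator_div_eq (B : Set ℝ) (x y : ℝ) :
    (B.indicator (fun _ => (1 : ℝ)) y) / (y - x) = B.indicator (fun y => (y - x)⁻¹) y := by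
  by_cases h : y ∈ B <;> simp [Set.indicator_of_mem, Set.indicator_of_notMem, h, one_div]

private lemma FHT_zero_of_null {B : Set ℝ} (hB : volume B = 0) :
    FHT (B.indicator fun _ => (1 : ℝ)) = fun _ => 0 := by
  funext x
  have hnm : ∀ᵐ y ∂(volume : Measure ℝ), y ∉ B := measure_eq_zero_iff_ae_notMem.mp hB
  have hae : ∀ᵐ y ∂(volume : Measure ℝ),
      (B.indicator fun _ => (1 : ℝ)) y / (y - x) = 0 := by
    filter_upwards [hnm] with y hy
    simp [Set.indicator_of_notMem hy]
  have hz : (fun ε : ℝ =>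
      (1 / Real.pi) * ((∫ y in Set.Ioo (-1 : ℝ) (x - ε),
        (B.indicator fun _ => (1 : ℝ)) y / (y - x)) +
      ∫ y in Set.Ioo (x + ε) (1 : ℝ),
        (B.indicator fun _ => (1 : ℝ)) y / (y - x))) = fun _ => (0 : ℝ) := by
    funext ε
    have h1 : (∫ y in Set.Ioo (-1 : ℝ) (x - ε),
        (B.indicator fun _ => (1 : ℝ)) y / (y - x)) = 0 := by
      rw [MeasureTheory.integral_congr_ae (MeasureTheory.ae_restrict_of_ae hae)]
      simp
    have h2 : (∫ y in Set.Ioo (x + ε) (1 : ℝ),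
        (B.indicator fun _ => (1 : ℝ)) y / (y - x)) = 0 := by
      rw [MeasureTheory.integral_congr_ae (MeasureTheory.ae_restrict_of_ae hae)]
      simp
    rw [h1, h2]; ring
  rw [FHT, hz]
  exact Filter.Tendsto.limUnder_eq tendsto_const_nhds

private lemma FHT_pos_of_left {B : Set ℝ} (hBm : MeasurableSet B) {a : ℝ}
    (hBs : B ⊆ Set.Ioo a 1) (hBpos : volume B ≠ 0) {x : ℝ}
    (hx : x ∈ Set.Ioo (-1 : ℝ) a) : 0 < FHT (B.indicator fun _ => (1 : ℝ)) x := by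
  obtain ⟨hx1, hx2⟩ := hx
  have hfin : volume B ≠ ∞ := by
    refine ne_top_of_le_ne_top ?_ (measure_mono hBs)
    rw [Real.volume_Ioo]; exact ENNReal.ofReal_ne_top
  -- integrability of y ↦ (y - x)⁻¹ on B
  have hcont : ContinuousOn (fun y : ℝ => (y - x)⁻¹) (Set.Icc a 1) := by
    refine (continuousOn_id.sub continuousOn_const).inv₀ ?_
    intro y hy
    have : x < y := lt_of_lt_of_le hx2 hy.1
    exact sub_ne_zero.mpr (ne_of_gt this)
  have hint : MeasureTheory.IntegrableOn (fun y : ℝ => (y - x)⁻¹) B volume :=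
    (hcont.integrableOn_Icc).mono_set (hBs.trans Set.Ioo_subset_Icc_self)
  set c₀ : ℝ := ∫ y in B, (y - x)⁻¹ with hc₀
  have hlb : (2 : ℝ)⁻¹ * (volume B).toReal ≤ c₀ := by
    refine Eq.trans_le ?_ (MeasureTheory.setIntegral_ge_of_const_le (c := (2 : ℝ)⁻¹) hBm hfin ?_ hint)
    · rw [smul_eq_mul, mul_comm]; rfl
    intro y hy
    have h1 : x < y := lt_trans hx2 (hBs hy).1
    have h2 : y - x ≤ 2 := by
      have := (hBs hy).2; linarith
    exact inv_anti₀ (by linarith) h2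
  have hc₀pos : 0 < c₀ :=
    lt_of_lt_of_le (mul_pos (by norm_num) (ENNReal.toReal_pos hBpos hfin)) hlb
  have hev : ∀ ε ∈ Set.Ioo (0 : ℝ) (a - x),
      (1 / Real.pi) * ((∫ y in Set.Ioo (-1 : ℝ) (x - ε),
        (B.indicator fun _ => (1 : ℝ)) y / (y - x)) +
      ∫ y in Set.Ioo (x + ε) (1 : ℝ),
        (B.indicator fun _ => (1 : ℝ)) y / (y - x)) = (1 / Real.pi) * c₀ := by
    intro ε hε
    have h1 : (∫ y in Set.Ioo (-1 : ℝ) (x - ε),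
        (B.indicator fun _ => (1 : ℝ)) y / (y - x)) = 0 := by
      refine MeasureTheory.setIntegral_eq_zero_of_forall_eq_zero ?_
      intro y hy
      have hyB : y ∉ B := by
        intro hmem
        have := (hBs hmem).1
        have := hy.2
        have := hε.2
        linarith [hε.1]
      simp [Set.indicator_of_notMem hyB]
    have h2 : (∫ y in Set.Ioo (x + ε) (1 : ℝ),
        (B.indicator fun _ => (1 : ℝ)) y / (y - x)) = c₀ := by
      have : (∫ y in Set.Ioo (x + ε) (1 : ℝ),
          (B.indicator fun _ => (1 : ℝ)) y / (y - x)) =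
          ∫ y in Set.Ioo (x + ε) (1 : ℝ), B.indicator (fun y => (y - x)⁻¹) y := by
        refine MeasureTheory.setIntegral_congr_fun measurableSet_Ioo ?_
        intro y _
        exact indicator_div_eq B x y
      rw [this, MeasureTheory.setIntegral_indicator hBm,
        Set.inter_eq_self_of_subset_right]
      intro y hy
      exact ⟨by linarith [(hBs hy).1, hε.2], (hBs hy).2⟩
    rw [h1, h2, zero_add]
  have hT : Filter.Tendsto (fun ε : ℝ =>
      (1 / Real.pi) * ((∫ y in Set.Ioo (-1 : ℝ) (x - ε),
        (B.indicator fun _ => (1 : ℝ)) y / (y - x)) +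
      ∫ y in Set.Ioo (x + ε) (1 : ℝ),
        (B.indicator fun _ => (1 : ℝ)) y / (y - x)))
      (nhdsWithin (0 : ℝ) (Set.Ioi 0)) (𝓝 ((1 / Real.pi) * c₀)) := by
    refine Filter.Tendsto.congr' ?_ tendsto_const_nhds
    filter_upwards [Ioo_mem_nhdsGT (by linarith : (0 : ℝ) < a - x)] with ε hε
    exact (hev ε hε).symm
  rw [FHT, hT.limUnder_eq]
  exact mul_pos (by positivity) hc₀pos

/-- A Borel set `A ⊆ (-1,1)` is `m_X`-null (i.e. `m_X(B) = T(χ_B) = 0` in `X` for all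
Borel `B ⊆ A`) if and only if `A` is Lebesgue-null. -/
theorem mX_null_iff_lebesgue_null (X : BFS) (hri : RearrInvariant X)
    (hB : NontrivialBoyd X) (hT : THilbBounded X)
    (A : Set ℝ) (hA : MeasurableSet A) (hA' : A ⊆ Set.Ioo (-1 : ℝ) 1) :
    (∀ B : Set ℝ, MeasurableSet B → B ⊆ A →
      FHT (B.indicator fun _ => (1 : ℝ)) =ᵐ[vol] 0) ↔ vol A = 0 := by
  have hvolIoo : ∀ S : Set ℝ, MeasurableSet S → S ⊆ Set.Ioo (-1 : ℝ) 1 → vol S = volume S := by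
    intro S hSm hSs
    rw [vol, Measure.restrict_apply hSm, Set.inter_eq_self_of_subset_left hSs]
  constructor
  · intro h
    by_contra hA0
    -- find n with positive measure in (-1 + 1/(n+1), 1)
    have hex : ∃ n : ℕ, vol (A ∩ Set.Ioo (-1 + 1 / (n + 1) : ℝ) 1) ≠ 0 := by
      by_contra hall
      push_neg at hall
      apply hA0
      refine measure_mono_null ?_ (measure_iUnion_null hall)
      intro y hy
      obtain ⟨hy1, hy2⟩ := hA' hy
      obtain ⟨n, hn⟩ := exists_nat_one_div_lt (show (0 : ℝ) < y + 1 by linarith)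
      exact Set.mem_iUnion.mpr ⟨n, hy, by constructor <;> [linarith [hn]; exact hy2]⟩
    obtain ⟨n, hn⟩ := hex
    set a : ℝ := -1 + 1 / (n + 1) with ha_def
    have hapos : (0 : ℝ) < 1 / (n + 1 : ℝ) := by positivity
    have ha1 : -1 < a := by simp only [ha_def]; linarith
    have ha2 : a ≤ 1 := by
      have : (1 : ℝ) / (n + 1) ≤ 1 := by
        rw [div_le_one (by positivity)]; linarith [Nat.cast_nonneg (α := ℝ) n]
      simp only [ha_def]; linarith
    set B : Set ℝ := A ∩ Set.Ioo a 1 with hB_def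
    have hBm : MeasurableSet B := hA.inter measurableSet_Ioo
    have hBA : B ⊆ A := Set.inter_subset_left
    have hBIoo : B ⊆ Set.Ioo a 1 := Set.inter_subset_right
    have hBsub : B ⊆ Set.Ioo (-1 : ℝ) 1 := hBA.trans hA'
    have hBvol : volume B ≠ 0 := by
      rw [← hvolIoo B hBm hBsub]; exact hn
    have hae := h B hBm hBA
    have hzero : vol {x | ¬ FHT (B.indicator fun _ => (1 : ℝ)) x = 0} = 0 := by
      exact hae
    have hsub : Set.Ioo (-1 : ℝ) a ⊆
        {x | ¬ FHT (B.indicator fun _ => (1 : ℝ)) x = 0} := by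
      intro x hx
      exact ne_of_gt (FHT_pos_of_left hBm hBIoo hBvol hx)
    have hS0 : vol (Set.Ioo (-1 : ℝ) a) = 0 := measure_mono_null hsub hzero
    rw [hvolIoo _ measurableSet_Ioo (Set.Ioo_subset_Ioo le_rfl ha2), Real.volume_Ioo] at hS0
    rw [ENNReal.ofReal_eq_zero] at hS0
    linarith
  · intro hA0 B hBm hBA
    have hBvol : volume B = 0 := by
      refine measure_mono_null hBA ?_
      rw [← hvolIoo A hA hA']
      exact hA0
    rw [FHT_zero_of_null hBvol]
    exact Filter.EventuallyEq.rfl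
end
end

section
/- Let X be a rearrangement invariant space over (-1,1) with nontrivial Boyd indices. Then the range {T(χ_A) : A ∈ ℬ} of the vector measure m_X is not an order bounded subset of X; i.e., there is no 0 ≤ h ∈ X with |T(χ_A)| ≤ h a.e. for all Borel A. -/
open MeasureTheory Set Filter Topology ENNReal NNReal

noncomputable section

/-- Explicit value of the finite Hilbert transform of `χ_{(t,1)}` to the left of `t`. -/
lemma FHT_indicator_Ioo (t x : ℝ) (hx : -1 < x) (hxt : x < t) (ht : t ≤ 1) :
    FHT ((Set.Ioo t 1).indicator fun _ => (1 : ℝ)) x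
      = (1 / Real.pi) * Real.log ((1 - x) / (t - x)) := by
  have htx : (0 : ℝ) < t - x := by linarith
  have hmem : Set.Ioo (0 : ℝ) (t - x) ∈ nhdsWithin (0 : ℝ) (Set.Ioi 0) :=
    Ioo_mem_nhdsGT_of_mem ⟨le_refl 0, htx⟩
  apply Filter.Tendsto.limUnder_eq
  apply Filter.Tendsto.congr' _ tendsto_const_nhds
  filter_upwards [hmem] with ε hε
  have h1 : (∫ y in Set.Ioo (-1 : ℝ) (x - ε),
      ((Set.Ioo t 1).indicator (fun _ => (1 : ℝ)) y) / (y - x)) = 0 := by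
    apply setIntegral_eq_zero_of_forall_eq_zero
    intro y hy
    have hyt : y ∉ Set.Ioo t 1 := by
      intro hmem'
      have := hmem'.1
      have := hy.2
      have := hε.1
      linarith
    simp [Set.indicator_of_notMem hyt]
  have h2 : (∫ y in Set.Ioo (x + ε) (1 : ℝ),
      ((Set.Ioo t 1).indicator (fun _ => (1 : ℝ)) y) / (y - x))
      = Real.log ((1 - x) / (t - x)) := by
    have hfun : (fun y => ((Set.Ioo t 1).indicator (fun _ => (1 : ℝ)) y) / (y - x))
        = (Set.Ioo t 1).indicator (fun y => (y - x)⁻¹) := by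
      funext y
      by_cases hy : y ∈ Set.Ioo t 1
      · simp [Set.indicator_of_mem hy, one_div]
      · simp [Set.indicator_of_notMem hy]
    rw [hfun, setIntegral_indicator measurableSet_Ioo]
    have hsub : Set.Ioo (x + ε) 1 ∩ Set.Ioo t 1 = Set.Ioo t 1 := by
      apply Set.inter_eq_right.mpr
      intro y hy
      exact ⟨by linarith [hy.1, hε.2], hy.2⟩
    rw [hsub, ← integral_Ioc_eq_integral_Ioo,
      ← intervalIntegral.integral_of_le (by linarith : t ≤ (1 : ℝ)),
      intervalIntegral.integral_comp_sub_right (fun u => u⁻¹) x]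
    rw [integral_inv_of_pos htx (by linarith : (0:ℝ) < 1 - x)]
  rw [h1, h2, zero_add]

/-- The range `{T(χ_A) : A Borel}` of `m_X` is not order bounded in `X`: there is no
`0 ≤ h ∈ X` with `|T(χ_A)| ≤ h` a.e. for all Borel `A ⊆ (-1,1)`. -/
theorem mX_range_not_order_bounded (X : BFS) (hri : RearrInvariant X)
    (hB : NontrivialBoyd X) (hT : THilbBounded X) :
    ¬ ∃ h : ℝ → ℝ, X.Mem h ∧ (∀ᵐ x ∂vol, 0 ≤ h x) ∧
      ∀ A : Set ℝ, MeasurableSet A → A ⊆ Set.Ioo (-1 : ℝ) 1 →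
        ∀ᵐ x ∂vol, |FHT (A.indicator fun _ => (1 : ℝ)) x| ≤ h x := by
  rintro ⟨h, hmem, hpos, hdom⟩
  -- Domination for all the countably many sets `(q, 1)`, `q` rational.
  have hall : ∀ᵐ x ∂vol, ∀ q : ℚ, -1 < (q : ℝ) → (q : ℝ) < 1 →
      |FHT ((Set.Ioo (q : ℝ) 1).indicator fun _ => (1 : ℝ)) x| ≤ h x := by
    rw [ae_all_iff]
    intro q
    rw [eventually_imp_distrib_left]
    intro hq1
    rw [eventually_imp_distrib_left]
    intro hq2
    exact hdom _ measurableSet_Ioo (fun y hy => ⟨by linarith [hy.1], hy.2⟩)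
  have hIoo : ∀ᵐ x ∂vol, x ∈ Set.Ioo (-1 : ℝ) 1 := ae_restrict_mem measurableSet_Ioo
  have hvol : vol ≠ 0 := by
    intro h0
    have h2 : vol (Set.Ioo (-1 : ℝ) 1) = 0 := by rw [h0]; rfl
    rw [vol, Measure.restrict_apply_self] at h2
    rw [Real.volume_Ioo] at h2
    norm_num at h2
  haveI : (ae vol).NeBot := ae_neBot.mpr hvol
  obtain ⟨x, hx, hhx, hxall⟩ := (hIoo.and (hpos.and hall)).exists
  have hπ : (0 : ℝ) < Real.pi := Real.pi_pos
  set a : ℝ := Real.pi * (h x + 1) with ha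
  have hapos : 0 < a := mul_pos hπ (by linarith)
  have hexp : 0 < (1 - x) * Real.exp (-a) := by
    have := Real.exp_pos (-a)
    have hx2 := hx.2
    nlinarith
  obtain ⟨q, hq1, hq2⟩ := exists_rat_btwn
    (show x < x + (1 - x) * Real.exp (-a) by linarith)
  have hq1' : x < (q : ℝ) := hq1
  have hqlt1 : (q : ℝ) < 1 := by
    have hexp1 : Real.exp (-a) < 1 := Real.exp_lt_one_iff.mpr (by linarith)
    have hx2 : x < 1 := hx.2
    nlinarith
  have key := hxall q (by linarith [hx.1]) hqlt1
  rw [FHT_indicator_Ioo (q : ℝ) x hx.1 hq1' (le_of_lt hqlt1)] at key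
  -- Derive the contradiction: the logarithm is too large.
  have hqx : (0 : ℝ) < (q : ℝ) - x := by linarith
  have hlog : a < Real.log ((1 - x) / ((q : ℝ) - x)) := by
    rw [Real.lt_log_iff_exp_lt (div_pos (by linarith [hx.2] : (0:ℝ) < 1 - x) hqx)]
    rw [lt_div_iff₀ hqx]
    have hlt : (q : ℝ) - x < (1 - x) * Real.exp (-a) := by linarith
    have hexpa : 0 < Real.exp a := Real.exp_pos a
    calc Real.exp a * ((q : ℝ) - x)
        < Real.exp a * ((1 - x) * Real.exp (-a)) := by
          exact mul_lt_mul_of_pos_left hlt hexpa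
      _ = 1 - x := by
          rw [Real.exp_neg]
          field_simp
  have hfin : h x + 1 < (1 / Real.pi) * Real.log ((1 - x) / ((q : ℝ) - x)) := by
    rw [show (1 / Real.pi) * Real.log ((1 - x) / ((q : ℝ) - x))
        = Real.log ((1 - x) / ((q : ℝ) - x)) / Real.pi from one_div_mul_eq_div _ _]
    rw [lt_div_iff₀ hπ]
    linarith [hlog]
  have := le_abs_self ((1 / Real.pi) * Real.log ((1 - x) / ((q : ℝ) - x)))
  linarith
end
end
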